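/- arXiv:2011.09450 — 5 statements merged into one kernel-verified Lean document; each statement's English description precedes it below -/
import Mathlib

section
/- Let N ≥ 1 be an integer, κ > 0, and let W : ℝ³ → ℝ be bounded with D_N(W) < ∞ and κ·D_N(W) < 2. Then every solution φ : Λ₊ → ℝ of the discrete scattering equation satisfying S := sup_{p∈Λ₊} |p|²·|φ(p)| < ∞ obeys the a priori bound S ≤ κ·(sup_{x∈ℝ³} |W(x)|)/(2 − κ·D_N(W)). In particular, sup_{p∈Λ₊} |p|²·|φ(p)| ≤ C·κ for a constant C depending only on sup|W| and D_N(W). -/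
open scoped Real ENNReal
open MeasureTheory

noncomputable section

abbrev E3 : Type := EuclideanSpace ℝ (Fin 3)

/-- The lattice `2πℤ³` in `ℝ³`. -/
def Lattice2pi : Set E3 := {p | ∃ k : Fin 3 → ℤ, ∀ i, p i = 2 * π * (k i)}

/-- The set `Λ₊` of nonzero lattice points of `2πℤ³`. -/
def LatticePos : Set E3 := {p | p ∈ Lattice2pi ∧ p ≠ 0}

/-- `φ : Λ₊ → ℝ` solves the discrete scattering equation: for every `p ∈ Λ₊` the sum
`Σ_{q∈Λ₊} W((p−q)/N)·φ(q)` converges absolutely and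
`|p|²·φ(p) + (κ/(2N))·Σ_q W((p−q)/N)·φ(q) = −(κ/2)·W(p/N)`. -/
def SolvesScatEq (N : ℕ) (κ : ℝ) (W : E3 → ℝ) (φ : LatticePos → ℝ) : Prop :=
  ∀ p : LatticePos,
    Summable (fun q : LatticePos => |W ((N : ℝ)⁻¹ • ((p : E3) - (q : E3))) * φ q|) ∧
    ‖(p : E3)‖ ^ 2 * φ p
        + (κ / (2 * N)) * ∑' q : LatticePos, W ((N : ℝ)⁻¹ • ((p : E3) - (q : E3))) * φ q
      = -(κ / 2) * W ((N : ℝ)⁻¹ • (p : E3))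

/-- `D_N(W) := sup_{p∈2πℤ³} (1/N³)·Σ_{q∈Λ₊} |W((p−q)/N)|·(N/|q|)²`, valued in `[0,∞]`. -/
def DN (N : ℕ) (W : E3 → ℝ) : ℝ≥0∞ :=
  ⨆ p ∈ Lattice2pi, ∑' q : LatticePos,
    ENNReal.ofReal ((1 / (N : ℝ) ^ 3) * (|W ((N : ℝ)⁻¹ • (p - (q : E3)))| * ((N : ℝ) / ‖(q : E3)‖) ^ 2))

/-- `D⁰_N(W) := (1/N³)·Σ_{q∈Λ₊} |W(q/N)|·(N/|q|)²`, valued in `[0,∞]`. -/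
def D0N (N : ℕ) (W : E3 → ℝ) : ℝ≥0∞ :=
  ∑' q : LatticePos,
    ENNReal.ofReal ((1 / (N : ℝ) ^ 3) * (|W ((N : ℝ)⁻¹ • (q : E3))| * ((N : ℝ) / ‖(q : E3)‖) ^ 2))

/-- A priori bound on solutions of the discrete scattering equation:
`S := sup_{p∈Λ₊} |p|²|φ(p)| ≤ κ·sup|W|/(2 − κ·D_N(W))`, and in particular `S ≤ C·κ`
for a constant `C` depending only on `sup|W|` and `D_N(W)`. -/
theorem statement0 (N : ℕ) (hN : 1 ≤ N) (κ : ℝ) (hκ : 0 < κ)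
    (W : E3 → ℝ) (hWbdd : BddAbove (Set.range fun x => |W x|))
    (hD : DN N W < ⊤) (hκD : ENNReal.ofReal κ * DN N W < 2)
    (φ : LatticePos → ℝ) (hφ : SolvesScatEq N κ W φ)
    (hS : BddAbove (Set.range fun p : LatticePos => ‖(p : E3)‖ ^ 2 * |φ p|)) :
    (⨆ p : LatticePos, ‖(p : E3)‖ ^ 2 * |φ p|)
        ≤ κ * (⨆ x : E3, |W x|) / (2 - κ * (DN N W).toReal) ∧
    ∃ C : ℝ, 0 ≤ C ∧ (⨆ p : LatticePos, ‖(p : E3)‖ ^ 2 * |φ p|) ≤ C * κ := by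

  classical
  -- N is positive as a real number
  have hNpos : (0:ℝ) < N := by exact_mod_cast Nat.lt_of_lt_of_le Nat.zero_lt_one hN
  -- Λ₊ is nonempty
  have hne : Nonempty LatticePos := by
    refine ⟨⟨EuclideanSpace.single 0 (2*π), ⟨fun i => if i = 0 then 1 else 0, ?_⟩, ?_⟩⟩
    · intro i
      by_cases hi : i = 0 <;> simp [EuclideanSpace.single_apply, hi]
    · intro h
      have h0 : (EuclideanSpace.single (0 : Fin 3) (2*π) : E3) 0 = (0 : E3) 0 := by rw [h]
      simp [EuclideanSpace.single_apply] at h0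
  haveI := hne
  have hDtop : DN N W ≠ ⊤ := hD.ne
  set D : ℝ := (DN N W).toReal with hDdef
  have hD0 : (0:ℝ) ≤ D := ENNReal.toReal_nonneg
  have hκD2 : κ * D < 2 := by
    have h1 : (ENNReal.ofReal κ * DN N W).toReal < ((2:ℝ≥0∞)).toReal :=
      ENNReal.toReal_strict_mono (by norm_num) hκD
    simpa [ENNReal.toReal_mul, ENNReal.toReal_ofReal hκ.le] using h1
  set M : ℝ := ⨆ x : E3, |W x| with hMdef
  have hMle : ∀ x : E3, |W x| ≤ M := fun x => le_ciSup hWbdd x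
  have hM0 : (0:ℝ) ≤ M := le_trans (abs_nonneg _) (hMle 0)
  set S : ℝ := ⨆ p : LatticePos, ‖(p : E3)‖ ^ 2 * |φ p| with hSdef
  have hSle : ∀ p : LatticePos, ‖(p : E3)‖ ^ 2 * |φ p| ≤ S := fun p => le_ciSup hS p
  have hS0 : (0:ℝ) ≤ S :=
    le_trans (mul_nonneg (by positivity) (abs_nonneg _)) (hSle hne.some)
  -- key pointwise bound
  have key : ∀ p : LatticePos, ‖(p : E3)‖ ^ 2 * |φ p| ≤ κ/2 * M + κ/2 * D * S := by
    intro p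
    obtain ⟨hsum, heq⟩ := hφ p
    set f : LatticePos → ℝ := fun q =>
      (1 / (N : ℝ) ^ 3) * (|W ((N : ℝ)⁻¹ • ((p : E3) - (q : E3)))| * ((N : ℝ) / ‖(q : E3)‖) ^ 2)
      with hfdef
    have hf0 : ∀ q, 0 ≤ f q := by
      intro q; positivity
    have hTple : (∑' q : LatticePos, ENNReal.ofReal (f q)) ≤ DN N W := by
      exact le_iSup₂ (f := fun (pp : E3) (_ : pp ∈ Lattice2pi) =>
        ∑' q : LatticePos, ENNReal.ofReal
          ((1 / (N : ℝ) ^ 3) * (|W ((N : ℝ)⁻¹ • (pp - (q : E3)))| * ((N : ℝ) / ‖(q : E3)‖) ^ 2)))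
        (p : E3) p.2.1
    have hTptop : (∑' q : LatticePos, ENNReal.ofReal (f q)) ≠ ⊤ :=
      (lt_of_le_of_lt hTple hD).ne
    have hfsumm : Summable f := by
      have h := ENNReal.summable_toReal hTptop
      have : (fun q : LatticePos => (ENNReal.ofReal (f q)).toReal) = f := by
        funext q; exact ENNReal.toReal_ofReal (hf0 q)
      rwa [this] at h
    have htsumf : (∑' q, f q) ≤ D := by
      have h1 : (∑' q : LatticePos, ENNReal.ofReal (f q)).toReal = ∑' q, f q := by
        rw [ENNReal.tsum_toReal_eq (fun q => ENNReal.ofReal_ne_top)]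
        exact tsum_congr fun q => ENNReal.toReal_ofReal (hf0 q)
      rw [← h1]
      exact ENNReal.toReal_mono hDtop hTple
    have hterm : ∀ q : LatticePos,
        |W ((N : ℝ)⁻¹ • ((p : E3) - (q : E3))) * φ q| ≤ S * ((N : ℝ) * f q) := by
      intro q
      have hq0 : (0:ℝ) < ‖(q : E3)‖ := norm_pos_iff.mpr q.2.2
      have hφq : |φ q| ≤ S / ‖(q : E3)‖ ^ 2 := by
        rw [le_div_iff₀ (by positivity)]
        calc |φ q| * ‖(q : E3)‖ ^ 2 = ‖(q : E3)‖ ^ 2 * |φ q| := by ring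
          _ ≤ S := hSle q
      rw [abs_mul]
      calc |W ((N : ℝ)⁻¹ • ((p : E3) - (q : E3)))| * |φ q|
          ≤ |W ((N : ℝ)⁻¹ • ((p : E3) - (q : E3)))| * (S / ‖(q : E3)‖ ^ 2) :=
            mul_le_mul_of_nonneg_left hφq (abs_nonneg _)
        _ = S * ((N : ℝ) * f q) := by
            have hgen : ∀ (n b a s : ℝ), n ≠ 0 → b ≠ 0 →
                a * (s / b^2) = s * (n * ((1/n^3) * (a * (n/b)^2))) := by
              intro n b a s hn hb; field_simp
            exact hgen _ _ _ _ hNpos.ne' hq0.ne'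
    have hsumm2 : Summable (fun q : LatticePos => S * ((N : ℝ) * f q)) :=
      (hfsumm.mul_left _).mul_left _
    have htsum : (∑' q : LatticePos, |W ((N : ℝ)⁻¹ • ((p : E3) - (q : E3))) * φ q|)
        ≤ S * ((N : ℝ) * D) := by
      calc (∑' q : LatticePos, |W ((N : ℝ)⁻¹ • ((p : E3) - (q : E3))) * φ q|)
          ≤ ∑' q : LatticePos, S * ((N : ℝ) * f q) := Summable.tsum_le_tsum hterm hsum hsumm2
        _ = S * ((N : ℝ) * ∑' q, f q) := by rw [tsum_mul_left, tsum_mul_left]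
        _ ≤ S * ((N : ℝ) * D) := by
            apply mul_le_mul_of_nonneg_left _ hS0
            exact mul_le_mul_of_nonneg_left htsumf hNpos.le
    have habs : |∑' q : LatticePos, W ((N : ℝ)⁻¹ • ((p : E3) - (q : E3))) * φ q|
        ≤ S * ((N : ℝ) * D) := by
      refine le_trans ?_ htsum
      have hsn : Summable (fun q : LatticePos =>
          ‖W ((N : ℝ)⁻¹ • ((p : E3) - (q : E3))) * φ q‖) := by
        simpa only [Real.norm_eq_abs] using hsum
      simpa only [Real.norm_eq_abs] using norm_tsum_le_tsum_norm hsn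
    set T : ℝ := ∑' q : LatticePos, W ((N : ℝ)⁻¹ • ((p : E3) - (q : E3))) * φ q with hTdef
    have e1 : ‖(p : E3)‖ ^ 2 * φ p = -(κ / 2) * W ((N : ℝ)⁻¹ • (p : E3)) - (κ / (2 * N)) * T := by
      rw [hTdef]; linarith [heq]
    have hWp : |W ((N : ℝ)⁻¹ • (p : E3))| ≤ M := hMle _
    have e2 : κ / (2 * N) * (S * ((N : ℝ) * D)) = κ/2 * D * S := by
      field_simp
    calc ‖(p : E3)‖ ^ 2 * |φ p| = |‖(p : E3)‖ ^ 2 * φ p| := by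
          rw [abs_mul, abs_of_nonneg (by positivity : (0:ℝ) ≤ ‖(p : E3)‖ ^ 2)]
      _ = |-(κ / 2) * W ((N : ℝ)⁻¹ • (p : E3)) - (κ / (2 * N)) * T| := by rw [e1]
      _ ≤ |-(κ / 2) * W ((N : ℝ)⁻¹ • (p : E3))| + |(κ / (2 * N)) * T| := abs_sub _ _
      _ = κ/2 * |W ((N : ℝ)⁻¹ • (p : E3))| + κ / (2 * N) * |T| := by
          rw [abs_mul, abs_mul, abs_neg, abs_of_nonneg (by positivity : (0:ℝ) ≤ κ/2),
            abs_of_nonneg (by positivity : (0:ℝ) ≤ κ/(2*N))]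
      _ ≤ κ/2 * M + κ / (2 * N) * (S * ((N : ℝ) * D)) := by
          gcongr
      _ = κ/2 * M + κ/2 * D * S := by rw [e2]
  have hSbound : S ≤ κ/2 * M + κ/2 * D * S := ciSup_le key
  have hfinal : S ≤ κ * M / (2 - κ * D) := by
    rw [le_div_iff₀ (by linarith)]
    nlinarith [hSbound]
  exact ⟨hfinal, M / (2 - κ * D), div_nonneg hM0 (by linarith), by
    calc S ≤ κ * M / (2 - κ * D) := hfinal
      _ = M / (2 - κ * D) * κ := by ring⟩
end
end

section
/- Let N ≥ 1 be an integer, κ > 0, and let W : ℝ³ → ℝ be bounded with D_N(W) < ∞ and κ·D_N(W) < 2. Then there exists exactly one function φ : Λ₊ → ℝ with sup_{p∈Λ₊} |p|²·|φ(p)| < ∞ that solves the discrete scattering equation. -/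
open scoped Real ENNReal
open MeasureTheory

noncomputable section

set_option maxHeartbeats 1000000 in
set_option synthInstance.maxHeartbeats 200000 in
/-- For `κ·D_N(W) < 2` there is exactly one solution `φ` of the discrete
scattering equation with `sup_{p∈Λ₊} |p|²·|φ(p)| < ∞`. -/
theorem statement1 (N : ℕ) (hN : 1 ≤ N) (κ : ℝ) (hκ : 0 < κ)
    (W : E3 → ℝ) (hWbdd : BddAbove (Set.range fun x => |W x|))
    (hD : DN N W < ⊤) (hκD : ENNReal.ofReal κ * DN N W < 2) :
    ∃! φ : LatticePos → ℝ,
      BddAbove (Set.range fun p : LatticePos => ‖(p : E3)‖ ^ 2 * |φ p|) ∧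
      SolvesScatEq N κ W φ := by
  classical
  have hN0 : (0:ℝ) < N := by exact_mod_cast Nat.lt_of_lt_of_le Nat.zero_lt_one hN
  set D : ℝ := (DN N W).toReal with hDdef
  have hD0 : 0 ≤ D := ENNReal.toReal_nonneg
  have hκD2 : κ * D < 2 := by
    have h1 := ENNReal.toReal_strict_mono (by norm_num : (2:ℝ≥0∞) ≠ ⊤) hκD
    rw [ENNReal.toReal_mul, ENNReal.toReal_ofReal hκ.le] at h1
    simpa using h1
  obtain ⟨M₀, hM₀⟩ := hWbdd
  set M : ℝ := max M₀ 0 with hMdef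
  have hM : ∀ x, |W x| ≤ M := fun x => le_max_of_le_left (hM₀ ⟨x, rfl⟩)
  have hM0 : 0 ≤ M := le_max_right _ _
  have hqpos : ∀ q : LatticePos, (0:ℝ) < ‖(q:E3)‖ ^ 2 := fun q =>
    pow_pos (norm_pos_iff.mpr q.2.2) 2
  -- the kernel
  set g : E3 → LatticePos → ℝ :=
    fun p q => |W ((N:ℝ)⁻¹ • (p - (q:E3)))| / ‖(q:E3)‖ ^ 2 with hgdef
  have hg0 : ∀ p q, 0 ≤ g p q := fun p q => by
    rw [hgdef]; positivity
  have key : ∀ p : E3, p ∈ Lattice2pi →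
      Summable (g p) ∧ ∑' q : LatticePos, g p q ≤ N * D := by
    intro p hp
    have hle : (∑' q : LatticePos, ENNReal.ofReal ((1/(N:ℝ)) * g p q)) ≤ DN N W := by
      have heq : (fun q : LatticePos => ENNReal.ofReal ((1/(N:ℝ)) * g p q))
          = fun q : LatticePos => ENNReal.ofReal ((1 / (N : ℝ) ^ 3) *
              (|W ((N : ℝ)⁻¹ • (p - (q : E3)))| * ((N : ℝ) / ‖(q : E3)‖) ^ 2)) := by
        funext q
        congr 1
        have hq : ‖(q:E3)‖ ≠ 0 := ne_of_gt (norm_pos_iff.mpr q.2.2)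
        rw [hgdef]
        field_simp
      rw [heq, DN]
      exact le_iSup₂ (f := fun p (_ : p ∈ Lattice2pi) => ∑' q : LatticePos,
        ENNReal.ofReal ((1 / (N : ℝ) ^ 3) *
          (|W ((N : ℝ)⁻¹ • (p - (q : E3)))| * ((N : ℝ) / ‖(q : E3)‖) ^ 2))) p hp
    have hS : (∑' q : LatticePos, ENNReal.ofReal (g p q))
        = ENNReal.ofReal (N:ℝ) * ∑' q : LatticePos, ENNReal.ofReal ((1/(N:ℝ)) * g p q) := by
      rw [← ENNReal.tsum_mul_left]
      refine tsum_congr fun q => ?_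
      rw [← ENNReal.ofReal_mul hN0.le]
      congr 1
      field_simp
    have hSle : (∑' q : LatticePos, ENNReal.ofReal (g p q))
        ≤ ENNReal.ofReal (N:ℝ) * DN N W := by
      rw [hS]; exact mul_le_mul_right hle _
    have hfin : (∑' q : LatticePos, ENNReal.ofReal (g p q)) ≠ ⊤ :=
      ne_top_of_le_ne_top (ENNReal.mul_ne_top ENNReal.ofReal_ne_top hD.ne) hSle
    constructor
    · have h2 := ENNReal.summable_toReal hfin
      exact h2.congr fun q => ENNReal.toReal_ofReal (hg0 p q)
    · have h1 : ∑' q : LatticePos, g p q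
          = (∑' q : LatticePos, ENNReal.ofReal (g p q)).toReal := by
        rw [ENNReal.tsum_toReal_eq (fun q => ENNReal.ofReal_ne_top)]
        exact tsum_congr fun q => (ENNReal.toReal_ofReal (hg0 p q)).symm
      rw [h1]
      calc (∑' q : LatticePos, ENNReal.ofReal (g p q)).toReal
          ≤ (ENNReal.ofReal (N:ℝ) * DN N W).toReal :=
            ENNReal.toReal_mono (ENNReal.mul_ne_top ENNReal.ofReal_ne_top hD.ne) hSle
        _ = N * D := by rw [ENNReal.toReal_mul, ENNReal.toReal_ofReal hN0.le]
  -- main estimate on the sums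
  have hsub : ∀ (ψ : LatticePos → ℝ) (C : ℝ), 0 ≤ C → (∀ q, |ψ q| ≤ C) →
      ∀ p : LatticePos,
        Summable (fun q : LatticePos =>
          |W ((N:ℝ)⁻¹ • ((p:E3) - (q:E3))) * (ψ q / ‖(q:E3)‖ ^ 2)|) ∧
        |∑' q : LatticePos, W ((N:ℝ)⁻¹ • ((p:E3) - (q:E3))) * (ψ q / ‖(q:E3)‖ ^ 2)|
          ≤ N * D * C := by
    intro ψ C hC hψ p
    obtain ⟨hgsum, hgle⟩ := key (p:E3) p.2.1
    have hpt : ∀ q : LatticePos,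
        |W ((N:ℝ)⁻¹ • ((p:E3) - (q:E3))) * (ψ q / ‖(q:E3)‖ ^ 2)| ≤ g (p:E3) q * C := by
      intro q
      have h1 : |ψ q| / ‖(q:E3)‖ ^ 2 ≤ C / ‖(q:E3)‖ ^ 2 :=
        div_le_div_of_nonneg_right (hψ q) (hqpos q).le
      calc |W ((N:ℝ)⁻¹ • ((p:E3) - (q:E3))) * (ψ q / ‖(q:E3)‖ ^ 2)|
          = |W ((N:ℝ)⁻¹ • ((p:E3) - (q:E3)))| * (|ψ q| / ‖(q:E3)‖ ^ 2) := by
            rw [abs_mul, abs_div, abs_of_nonneg (hqpos q).le]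
        _ ≤ |W ((N:ℝ)⁻¹ • ((p:E3) - (q:E3)))| * (C / ‖(q:E3)‖ ^ 2) :=
            mul_le_mul_of_nonneg_left h1 (abs_nonneg _)
        _ = g (p:E3) q * C := by rw [hgdef]; ring
    have hsum : Summable (fun q : LatticePos =>
        |W ((N:ℝ)⁻¹ • ((p:E3) - (q:E3))) * (ψ q / ‖(q:E3)‖ ^ 2)|) :=
      Summable.of_nonneg_of_le (fun q => abs_nonneg _) hpt (hgsum.mul_right C)
    refine ⟨hsum, ?_⟩
    calc |∑' q : LatticePos, W ((N:ℝ)⁻¹ • ((p:E3) - (q:E3))) * (ψ q / ‖(q:E3)‖ ^ 2)|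
        ≤ ∑' q : LatticePos, |W ((N:ℝ)⁻¹ • ((p:E3) - (q:E3))) * (ψ q / ‖(q:E3)‖ ^ 2)| := by
          have h' : Summable (fun q : LatticePos =>
              ‖W ((N:ℝ)⁻¹ • ((p:E3) - (q:E3))) * (ψ q / ‖(q:E3)‖ ^ 2)‖) :=
            hsum.congr fun q => (Real.norm_eq_abs _).symm
          have h2 := norm_tsum_le_tsum_norm h'
          rw [Real.norm_eq_abs] at h2
          exact h2.trans_eq (tsum_congr fun q => Real.norm_eq_abs _)
      _ ≤ ∑' q : LatticePos, g (p:E3) q * C :=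
          Summable.tsum_le_tsum hpt hsum (hgsum.mul_right C)
      _ = (∑' q : LatticePos, g (p:E3) q) * C := tsum_mul_right
      _ ≤ N * D * C := mul_le_mul_of_nonneg_right hgle hC
  set r : ℝ := κ * D / 2 with hrdef
  have hr0 : 0 ≤ r := by rw [hrdef]; positivity
  have hr1 : r < 1 := by rw [hrdef]; linarith
  -- the fixed point map
  set Tf : (LatticePos → ℝ) → LatticePos → ℝ := fun ψ p =>
    -(κ/2) * W ((N:ℝ)⁻¹ • (p:E3)) - (κ/(2*N)) * ∑' q : LatticePos,
      W ((N:ℝ)⁻¹ • ((p:E3) - (q:E3))) * (ψ q / ‖(q:E3)‖ ^ 2) with hTfdef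
  have hTf_bound : ∀ (ψ : LatticePos → ℝ) (C : ℝ), 0 ≤ C → (∀ q, |ψ q| ≤ C) →
      ∀ p, |Tf ψ p| ≤ κ/2 * M + r * C := by
    intro ψ C hC hψ p
    have h := (hsub ψ C hC hψ p).2
    have heq : Tf ψ p = -((κ/2) * W ((N:ℝ)⁻¹ • (p:E3)) + (κ/(2*N)) * ∑' q : LatticePos,
        W ((N:ℝ)⁻¹ • ((p:E3) - (q:E3))) * (ψ q / ‖(q:E3)‖ ^ 2)) := by
      rw [hTfdef]; ring
    rw [heq, abs_neg]
    calc |(κ/2) * W ((N:ℝ)⁻¹ • (p:E3)) + (κ/(2*N)) * ∑' q : LatticePos,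
          W ((N:ℝ)⁻¹ • ((p:E3) - (q:E3))) * (ψ q / ‖(q:E3)‖ ^ 2)|
        ≤ |(κ/2) * W ((N:ℝ)⁻¹ • (p:E3))| + |(κ/(2*N)) * ∑' q : LatticePos,
          W ((N:ℝ)⁻¹ • ((p:E3) - (q:E3))) * (ψ q / ‖(q:E3)‖ ^ 2)| := abs_add_le _ _
      _ ≤ κ/2 * M + r * C := by
          have h1 : |(κ/2) * W ((N:ℝ)⁻¹ • (p:E3))| ≤ κ/2 * M := by
            rw [abs_mul, abs_of_nonneg (by positivity : (0:ℝ) ≤ κ/2)]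
            exact mul_le_mul_of_nonneg_left (hM _) (by positivity)
          have h2 : |(κ/(2*N)) * ∑' q : LatticePos,
              W ((N:ℝ)⁻¹ • ((p:E3) - (q:E3))) * (ψ q / ‖(q:E3)‖ ^ 2)| ≤ r * C := by
            rw [abs_mul, abs_of_nonneg (by positivity : (0:ℝ) ≤ κ/(2*N))]
            calc κ/(2*N) * |∑' q : LatticePos,
                  W ((N:ℝ)⁻¹ • ((p:E3) - (q:E3))) * (ψ q / ‖(q:E3)‖ ^ 2)|
                ≤ κ/(2*N) * (N * D * C) :=
                  mul_le_mul_of_nonneg_left h (by positivity)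
              _ = r * C := by rw [hrdef]; field_simp
          linarith
  have happly : ∀ (ψ : lp (fun _ : LatticePos => ℝ) ∞) (q : LatticePos), |ψ q| ≤ ‖ψ‖ := by
    intro ψ q
    simpa [Real.norm_eq_abs] using lp.norm_apply_le_norm ENNReal.top_ne_zero ψ q
  have memTf : ∀ ψ : lp (fun _ : LatticePos => ℝ) ∞, Memℓp (Tf ψ) ∞ := by
    intro ψ
    apply memℓp_infty
    refine ⟨κ/2 * M + r * ‖ψ‖, ?_⟩
    rintro x ⟨p, rfl⟩
    simpa [Real.norm_eq_abs] using
      hTf_bound ψ ‖ψ‖ (norm_nonneg _) (happly ψ) p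
  set T : lp (fun _ : LatticePos => ℝ) ∞ → lp (fun _ : LatticePos => ℝ) ∞ :=
    fun ψ => ⟨Tf ψ, memTf ψ⟩ with hTdef
  have hTapp : ∀ (ψ : lp (fun _ : LatticePos => ℝ) ∞) (p : LatticePos),
      (T ψ) p = Tf ψ p := fun ψ p => rfl
  have hTlip : LipschitzWith r.toNNReal T := by
    apply LipschitzWith.of_dist_le_mul
    intro ψ₁ ψ₂
    rw [dist_eq_norm, dist_eq_norm]
    have hcoe : (r.toNNReal : ℝ) = r := Real.coe_toNNReal r hr0
    rw [hcoe]
    refine lp.norm_le_of_forall_le (mul_nonneg hr0 (norm_nonneg _)) fun p => ?_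
    have hδ : ∀ q : LatticePos, |ψ₁ q - ψ₂ q| ≤ ‖ψ₁ - ψ₂‖ := by
      intro q
      have := happly (ψ₁ - ψ₂) q
      simpa [lp.coeFn_sub] using this
    have hs₁ := ((hsub ψ₁ ‖ψ₁‖ (norm_nonneg _) (happly ψ₁) p).1).of_abs
    have hs₂ := ((hsub ψ₂ ‖ψ₂‖ (norm_nonneg _) (happly ψ₂) p).1).of_abs
    have hb := (hsub (fun q => ψ₁ q - ψ₂ q) ‖ψ₁ - ψ₂‖ (norm_nonneg _) hδ p).2
    have hTp : (T ψ₁ - T ψ₂) p = Tf ψ₁ p - Tf ψ₂ p := by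
      rw [lp.coeFn_sub]; rfl
    rw [hTp, Real.norm_eq_abs]
    have hdiff : Tf ψ₁ p - Tf ψ₂ p
        = -(κ/(2*N)) * ((∑' q : LatticePos,
            W ((N:ℝ)⁻¹ • ((p:E3) - (q:E3))) * (ψ₁ q / ‖(q:E3)‖ ^ 2))
          - ∑' q : LatticePos,
            W ((N:ℝ)⁻¹ • ((p:E3) - (q:E3))) * (ψ₂ q / ‖(q:E3)‖ ^ 2)) := by
      rw [hTfdef]; ring
    have hsub2 : (∑' q : LatticePos,
            W ((N:ℝ)⁻¹ • ((p:E3) - (q:E3))) * (ψ₁ q / ‖(q:E3)‖ ^ 2))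
          - ∑' q : LatticePos,
            W ((N:ℝ)⁻¹ • ((p:E3) - (q:E3))) * (ψ₂ q / ‖(q:E3)‖ ^ 2)
        = ∑' q : LatticePos,
            W ((N:ℝ)⁻¹ • ((p:E3) - (q:E3))) * ((ψ₁ q - ψ₂ q) / ‖(q:E3)‖ ^ 2) := by
      rw [← Summable.tsum_sub hs₁ hs₂]
      exact tsum_congr fun q => by ring
    rw [hdiff, hsub2, abs_mul, abs_neg, abs_of_nonneg (by positivity : (0:ℝ) ≤ κ/(2*N))]
    calc κ/(2*N) * |∑' q : LatticePos,
          W ((N:ℝ)⁻¹ • ((p:E3) - (q:E3))) * ((ψ₁ q - ψ₂ q) / ‖(q:E3)‖ ^ 2)|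
        ≤ κ/(2*N) * (N * D * ‖ψ₁ - ψ₂‖) := mul_le_mul_of_nonneg_left hb (by positivity)
      _ = r * ‖ψ₁ - ψ₂‖ := by rw [hrdef]; field_simp
  have hcontr : ContractingWith r.toNNReal T := by
    refine ⟨?_, hTlip⟩
    rw [← NNReal.coe_lt_coe, Real.coe_toNNReal r hr0, NNReal.coe_one]
    exact hr1
  haveI : Nonempty (lp (fun _ : LatticePos => ℝ) ∞) := ⟨0⟩
  set ψ : lp (fun _ : LatticePos => ℝ) ∞ := ContractingWith.fixedPoint T hcontr with hψdef
  have hψfix : ∀ p : LatticePos, Tf ψ p = ψ p := by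
    intro p
    have h := hcontr.fixedPoint_isFixedPt
    have := congrFun (congrArg Subtype.val h) p
    rw [← hψdef] at this
    exact this
  have hψeq : ∀ p : LatticePos,
      ψ p = -(κ/2) * W ((N:ℝ)⁻¹ • (p:E3)) - (κ/(2*N)) * ∑' q : LatticePos,
        W ((N:ℝ)⁻¹ • ((p:E3) - (q:E3))) * (ψ q / ‖(q:E3)‖ ^ 2) := by
    intro p
    rw [← hψfix p, hTfdef]
  refine ⟨fun p => ψ p / ‖(p:E3)‖ ^ 2, ⟨?_, ?_⟩, ?_⟩
  · -- boundedness
    refine ⟨‖ψ‖, ?_⟩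
    rintro x ⟨p, rfl⟩
    have heq : ‖(p:E3)‖ ^ 2 * |ψ p / ‖(p:E3)‖ ^ 2| = |ψ p| := by
      rw [abs_div, abs_of_nonneg (hqpos p).le, mul_div_assoc']
      exact mul_div_cancel_left₀ _ (ne_of_gt (hqpos p))
    simpa [heq] using happly ψ p
  · -- it solves the equation
    intro p
    constructor
    · exact (hsub ψ ‖ψ‖ (norm_nonneg _) (happly ψ) p).1
    · have h1 : ‖(p:E3)‖ ^ 2 * (ψ p / ‖(p:E3)‖ ^ 2) = ψ p := by
        rw [mul_div_assoc']
        exact mul_div_cancel_left₀ _ (ne_of_gt (hqpos p))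
      have h2 := hψeq p
      simp only []
      rw [h1]
      linarith [h2]
  · -- uniqueness
    rintro φ' ⟨hb', hs'⟩
    have hmem' : Memℓp (fun p : LatticePos => ‖(p:E3)‖ ^ 2 * φ' p) ∞ := by
      apply memℓp_infty
      obtain ⟨C, hC⟩ := hb'
      refine ⟨C, ?_⟩
      rintro x ⟨p, rfl⟩
      have h := hC ⟨p, rfl⟩
      simpa [Real.norm_eq_abs, abs_mul, abs_of_nonneg (hqpos p).le] using h
    set ψ' : lp (fun _ : LatticePos => ℝ) ∞ := ⟨fun p : LatticePos => ‖(p:E3)‖ ^ 2 * φ' p, hmem'⟩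
      with hψ'def
    have hfix' : Function.IsFixedPt T ψ' := by
      refine Subtype.ext (funext fun p => ?_)
      show Tf ψ' p = ψ' p
      have hsum_eq : (∑' q : LatticePos,
          W ((N:ℝ)⁻¹ • ((p:E3) - (q:E3))) * (ψ' q / ‖(q:E3)‖ ^ 2))
          = ∑' q : LatticePos, W ((N:ℝ)⁻¹ • ((p:E3) - (q:E3))) * φ' q := by
        refine tsum_congr fun q => ?_
        have : ψ' q = ‖(q:E3)‖ ^ 2 * φ' q := rfl
        rw [this]
        congr 1
        exact mul_div_cancel_left₀ _ (ne_of_gt (hqpos q))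
      have heq := (hs' p).2
      have hψ'p : ψ' p = ‖(p:E3)‖ ^ 2 * φ' p := rfl
      rw [hTfdef]
      simp only [hsum_eq, hψ'p]
      linarith [heq]
    have hψ'eq : ψ' = ψ := hcontr.fixedPoint_unique hfix'
    funext p
    have h := congrFun (congrArg Subtype.val hψ'eq) p
    have h2 : ‖(p:E3)‖ ^ 2 * φ' p = ψ p := h
    rw [← h2]
    exact (mul_div_cancel_left₀ _ (ne_of_gt (hqpos p))).symm
end
end

section
/- Let N ≥ 1 be an integer, κ > 0, and let W : ℝ³ → ℝ be bounded and even (W(−x) = W(x)) with D_N(W) < ∞ and κ·D_N(W) < 2. Then the solution φ : Λ₊ → ℝ of the discrete scattering equation with sup_{p∈Λ₊} |p|²·|φ(p)| < ∞ is absolutely summable, with ℓ¹-bound Σ_{p∈Λ₊} |φ(p)| ≤ κ·N·D_N(W)/(2 − κ·D_N(W)). In particular Σ_{p∈Λ₊} |φ(p)| ≤ C·κ·N for a constant C depending only on D_N(W). -/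
open scoped Real ENNReal
open MeasureTheory

noncomputable section

lemma zero_mem_lattice : (0 : E3) ∈ Lattice2pi := ⟨0, by simp [Lattice2pi]⟩

lemma latticePos_norm_pos (q : LatticePos) : 0 < ‖(q : E3)‖ :=
  norm_pos_iff.mpr q.2.2

lemma L1E (N : ℕ) (hN : 1 ≤ N) (W : E3 → ℝ) {p₀ : E3} (hp₀ : p₀ ∈ Lattice2pi) :
    ∑' q : LatticePos, ENNReal.ofReal (|W ((N : ℝ)⁻¹ • (p₀ - (q : E3)))| / ‖(q : E3)‖ ^ 2)
      ≤ ENNReal.ofReal (N : ℝ) * DN N W := by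
  have hNpos : (0 : ℝ) < (N : ℝ) := by exact_mod_cast hN
  have hle : (∑' q : LatticePos,
      ENNReal.ofReal ((1 / (N : ℝ) ^ 3) * (|W ((N : ℝ)⁻¹ • (p₀ - (q : E3)))| * ((N : ℝ) / ‖(q : E3)‖) ^ 2)))
      ≤ DN N W := by
    exact le_iSup₂ (f := fun p (_ : p ∈ Lattice2pi) => ∑' q : LatticePos,
      ENNReal.ofReal ((1 / (N : ℝ) ^ 3) * (|W ((N : ℝ)⁻¹ • (p - (q : E3)))| * ((N : ℝ) / ‖(q : E3)‖) ^ 2))) p₀ hp₀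
  calc ∑' q : LatticePos, ENNReal.ofReal (|W ((N : ℝ)⁻¹ • (p₀ - (q : E3)))| / ‖(q : E3)‖ ^ 2)
      = ∑' q : LatticePos, ENNReal.ofReal (N : ℝ) *
          ENNReal.ofReal ((1 / (N : ℝ) ^ 3) * (|W ((N : ℝ)⁻¹ • (p₀ - (q : E3)))| * ((N : ℝ) / ‖(q : E3)‖) ^ 2)) := by
        refine tsum_congr fun q => ?_
        rw [← ENNReal.ofReal_mul hNpos.le]
        congr 1
        have hq := (latticePos_norm_pos q).ne'
        field_simp
    _ = ENNReal.ofReal (N : ℝ) * ∑' q : LatticePos,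
          ENNReal.ofReal ((1 / (N : ℝ) ^ 3) * (|W ((N : ℝ)⁻¹ • (p₀ - (q : E3)))| * ((N : ℝ) / ‖(q : E3)‖) ^ 2)) :=
        ENNReal.tsum_mul_left
    _ ≤ ENNReal.ofReal (N : ℝ) * DN N W := by gcongr

lemma L1R (N : ℕ) (hN : 1 ≤ N) (W : E3 → ℝ) (hDne : DN N W ≠ ⊤) {p₀ : E3} (hp₀ : p₀ ∈ Lattice2pi) :
    Summable (fun q : LatticePos => |W ((N : ℝ)⁻¹ • (p₀ - (q : E3)))| / ‖(q : E3)‖ ^ 2) ∧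
    ∑' q : LatticePos, |W ((N : ℝ)⁻¹ • (p₀ - (q : E3)))| / ‖(q : E3)‖ ^ 2
      ≤ (N : ℝ) * (DN N W).toReal := by
  have h := L1E N hN W hp₀
  have htop : (∑' q : LatticePos,
      ENNReal.ofReal (|W ((N : ℝ)⁻¹ • (p₀ - (q : E3)))| / ‖(q : E3)‖ ^ 2)) ≠ ⊤ :=
    (h.trans_lt (ENNReal.mul_lt_top ENNReal.ofReal_lt_top (lt_top_iff_ne_top.mpr hDne))).ne
  have hnn : ∀ q : LatticePos, 0 ≤ |W ((N : ℝ)⁻¹ • (p₀ - (q : E3)))| / ‖(q : E3)‖ ^ 2 :=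
    fun q => by positivity
  have hsum : Summable (fun q : LatticePos => |W ((N : ℝ)⁻¹ • (p₀ - (q : E3)))| / ‖(q : E3)‖ ^ 2) := by
    have := ENNReal.summable_toReal htop
    simpa [ENNReal.toReal_ofReal (hnn _)] using this
  refine ⟨hsum, ?_⟩
  have : ENNReal.ofReal (∑' q : LatticePos, |W ((N : ℝ)⁻¹ • (p₀ - (q : E3)))| / ‖(q : E3)‖ ^ 2)
      ≤ ENNReal.ofReal ((N : ℝ) * (DN N W).toReal) := by
    rw [ENNReal.ofReal_tsum_of_nonneg hnn hsum,
      ENNReal.ofReal_mul (by positivity), ENNReal.ofReal_toReal hDne]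
    exact h
  have hb : (0:ℝ) ≤ (N : ℝ) * (DN N W).toReal := by positivity
  exact (ENNReal.ofReal_le_ofReal_iff hb).mp this

/-- For even bounded `W` with `κ·D_N(W) < 2`, the solution of the discrete
scattering equation with `sup_p |p|²|φ(p)| < ∞` is absolutely summable, with
`Σ_{p∈Λ₊} |φ(p)| ≤ κ·N·D_N(W)/(2 − κ·D_N(W))`; in particular `Σ_p |φ(p)| ≤ C·κ·N`. -/
theorem statement4 (N : ℕ) (hN : 1 ≤ N) (κ : ℝ) (hκ : 0 < κ)
    (W : E3 → ℝ) (hWbdd : BddAbove (Set.range fun x => |W x|))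
    (hWeven : ∀ x : E3, W (-x) = W x)
    (hD : DN N W < ⊤) (hκD : ENNReal.ofReal κ * DN N W < 2)
    (φ : LatticePos → ℝ) (hφ : SolvesScatEq N κ W φ)
    (hS : BddAbove (Set.range fun p : LatticePos => ‖(p : E3)‖ ^ 2 * |φ p|)) :
    Summable (fun p : LatticePos => |φ p|) ∧
    ∑' p : LatticePos, |φ p|
        ≤ κ * N * (DN N W).toReal / (2 - κ * (DN N W).toReal) ∧
    ∃ C : ℝ, 0 ≤ C ∧ ∑' p : LatticePos, |φ p| ≤ C * κ * N := by
  have hNpos : (0 : ℝ) < (N : ℝ) := by exact_mod_cast hN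
  have hDne : DN N W ≠ ⊤ := hD.ne
  set D : ℝ := (DN N W).toReal with hDdef
  have hD0 : 0 ≤ D := ENNReal.toReal_nonneg
  -- κ * D < 2
  have hκD2 : κ * D < 2 := by
    have h1 : (ENNReal.ofReal κ * DN N W).toReal < (2 : ℝ≥0∞).toReal := by
      refine ENNReal.toReal_strict_mono (by norm_num) hκD
    rwa [ENNReal.toReal_mul, ENNReal.toReal_ofReal hκ.le, ENNReal.toReal_ofNat] at h1
  have h2κD : 0 < 2 - κ * D := by linarith
  -- bound on W
  obtain ⟨CW, hCW'⟩ := hWbdd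
  have hCW : ∀ x : E3, |W x| ≤ CW := fun x => hCW' ⟨x, rfl⟩
  -- bound on weighted sup of φ
  obtain ⟨M₀, hM₀'⟩ := hS
  have hM₀ : ∀ p : LatticePos, ‖(p : E3)‖ ^ 2 * |φ p| ≤ M₀ := fun p => hM₀' ⟨p, rfl⟩
  set M : ℝ := max M₀ 0 with hMdef
  have hM0 : 0 ≤ M := le_max_right _ _
  have hM : ∀ p : LatticePos, |φ p| ≤ M / ‖(p : E3)‖ ^ 2 := by
    intro p
    have hp2 : (0:ℝ) < ‖(p : E3)‖ ^ 2 := pow_pos (latticePos_norm_pos p) 2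
    rw [le_div_iff₀ hp2]
    calc |φ p| * ‖(p : E3)‖ ^ 2 = ‖(p : E3)‖ ^ 2 * |φ p| := by ring
      _ ≤ M₀ := hM₀ p
      _ ≤ M := le_max_left _ _
  set c : ℝ := κ * D / 2 with hcdef
  have hc0 : 0 ≤ c := by positivity
  have hc1 : c < 1 := by rw [hcdef]; linarith
  set L : ℝ := κ * N * D / (2 - κ * D) with hLdef
  have hL0 : 0 ≤ L := by positivity
  have hLid : κ * (N : ℝ) * D / 2 + c * L = L := by
    rw [hcdef, hLdef]; field_simp; ring
  -- evenness identity
  have heq : ∀ a b : E3, W ((N : ℝ)⁻¹ • (a - b)) = W ((N : ℝ)⁻¹ • (b - a)) := by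
    intro a b
    rw [← hWeven ((N : ℝ)⁻¹ • (b - a)), ← smul_neg, neg_sub]
  -- main induction
  have key : ∀ n : ℕ, ∃ Φ : LatticePos → ℝ,
      Summable (fun p : LatticePos => |Φ p|) ∧
      (∑' p : LatticePos, |Φ p|) ≤ L ∧
      ∀ p : LatticePos, |φ p - Φ p| ≤ c ^ n * M / ‖(p : E3)‖ ^ 2 := by
    intro n
    induction n with
    | zero =>
      refine ⟨0, ?_, ?_, ?_⟩
      · simpa using summable_zero
      · simpa using hL0
      · intro p; simpa using hM p
    | succ n ih =>
      obtain ⟨Φ, hΦsum, hΦL, hΦrem⟩ := ih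
      set Φ' : LatticePos → ℝ := fun p =>
        (-(κ / 2) * W ((N : ℝ)⁻¹ • (p : E3))
          - (κ / (2 * N)) * ∑' q : LatticePos, W ((N : ℝ)⁻¹ • ((p : E3) - (q : E3))) * Φ q)
          / ‖(p : E3)‖ ^ 2 with hΦ'def
      -- summability of the inner sum for each p
      have hsumWΦabs : ∀ p : LatticePos,
          Summable (fun q : LatticePos => |W ((N : ℝ)⁻¹ • ((p : E3) - (q : E3)))| * |Φ q|) := by
        intro p
        refine Summable.of_nonneg_of_le (fun q => by positivity) (fun q => ?_) (hΦsum.mul_left CW)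
        exact mul_le_mul_of_nonneg_right (hCW _) (abs_nonneg _)
      have hsumWΦ : ∀ p : LatticePos,
          Summable (fun q : LatticePos => W ((N : ℝ)⁻¹ • ((p : E3) - (q : E3))) * Φ q) := by
        intro p
        refine Summable.of_abs ?_
        simpa [abs_mul] using hsumWΦabs p
      -- remainder estimate
      have hrem : ∀ p : LatticePos, |φ p - Φ' p| ≤ c ^ (n+1) * M / ‖(p : E3)‖ ^ 2 := by
        intro p
        have hp2 : (0:ℝ) < ‖(p : E3)‖ ^ 2 := pow_pos (latticePos_norm_pos p) 2
        have hL1p := L1R N hN W hDne (p.2.1)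
        have hsumWφ : Summable (fun q : LatticePos =>
            W ((N : ℝ)⁻¹ • ((p : E3) - (q : E3))) * φ q) := (hφ p).1.of_abs
        have hφpeq : φ p = (-(κ / 2) * W ((N : ℝ)⁻¹ • (p : E3))
            - (κ / (2 * N)) * ∑' q : LatticePos, W ((N : ℝ)⁻¹ • ((p : E3) - (q : E3))) * φ q)
            / ‖(p : E3)‖ ^ 2 := by
          have hh := (hφ p).2
          rw [eq_div_iff hp2.ne']
          linear_combination hh
        have hdiff : φ p - Φ' p = -(κ / (2 * N)) *
            (∑' q : LatticePos, W ((N : ℝ)⁻¹ • ((p : E3) - (q : E3))) * (φ q - Φ q))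
            / ‖(p : E3)‖ ^ 2 := by
          rw [hφpeq, hΦ'def]
          have hts : (∑' q : LatticePos, W ((N : ℝ)⁻¹ • ((p : E3) - (q : E3))) * (φ q - Φ q))
              = (∑' q : LatticePos, W ((N : ℝ)⁻¹ • ((p : E3) - (q : E3))) * φ q)
                - (∑' q : LatticePos, W ((N : ℝ)⁻¹ • ((p : E3) - (q : E3))) * Φ q) := by
            rw [← Summable.tsum_sub hsumWφ (hsumWΦ p)]
            exact tsum_congr fun q => by ring
          rw [hts]
          field_simp
          ring
        -- bound the remainder sum
        have hmajsum : Summable (fun q : LatticePos =>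
            |W ((N : ℝ)⁻¹ • ((p : E3) - (q : E3)))| * (c ^ n * M / ‖(q : E3)‖ ^ 2)) := by
          have := hL1p.1.mul_left (c ^ n * M)
          refine this.congr fun q => ?_
          ring
        have habsum : Summable (fun q : LatticePos =>
            |W ((N : ℝ)⁻¹ • ((p : E3) - (q : E3))) * (φ q - Φ q)|) := by
          refine Summable.of_nonneg_of_le (fun q => abs_nonneg _) (fun q => ?_) hmajsum
          rw [abs_mul]
          exact mul_le_mul_of_nonneg_left (hΦrem q) (abs_nonneg _)
        have hbnd : |∑' q : LatticePos, W ((N : ℝ)⁻¹ • ((p : E3) - (q : E3))) * (φ q - Φ q)|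
            ≤ c ^ n * M * ((N : ℝ) * D) := by
          calc |∑' q : LatticePos, W ((N : ℝ)⁻¹ • ((p : E3) - (q : E3))) * (φ q - Φ q)|
              ≤ ∑' q : LatticePos, |W ((N : ℝ)⁻¹ • ((p : E3) - (q : E3))) * (φ q - Φ q)| := by
                simpa only [Real.norm_eq_abs] using norm_tsum_le_tsum_norm (f := fun q : LatticePos =>
                  W ((N : ℝ)⁻¹ • ((p : E3) - (q : E3))) * (φ q - Φ q)) (by simpa only [Real.norm_eq_abs] using habsum)
            _ ≤ ∑' q : LatticePos,
                  |W ((N : ℝ)⁻¹ • ((p : E3) - (q : E3)))| * (c ^ n * M / ‖(q : E3)‖ ^ 2) := by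
                refine Summable.tsum_le_tsum (fun q => ?_) habsum hmajsum
                rw [abs_mul]
                exact mul_le_mul_of_nonneg_left (hΦrem q) (abs_nonneg _)
            _ = (c ^ n * M) * ∑' q : LatticePos,
                  |W ((N : ℝ)⁻¹ • ((p : E3) - (q : E3)))| / ‖(q : E3)‖ ^ 2 := by
                rw [← tsum_mul_left]
                exact tsum_congr fun q => by ring
            _ ≤ (c ^ n * M) * ((N : ℝ) * D) := by
                refine mul_le_mul_of_nonneg_left hL1p.2 (by positivity)
            _ = c ^ n * M * ((N : ℝ) * D) := by ring
        rw [hdiff]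
        rw [abs_div, abs_of_pos hp2, div_le_div_iff₀ hp2 hp2]
        rw [abs_mul, abs_neg, abs_of_pos (by positivity : (0:ℝ) < κ / (2 * N))]
        have : κ / (2 * N) * (c ^ n * M * ((N : ℝ) * D)) = c ^ (n+1) * M := by
          rw [pow_succ]; field_simp; ring
        calc κ / (2 * N) * |∑' q : LatticePos, W ((N : ℝ)⁻¹ • ((p : E3) - (q : E3))) * (φ q - Φ q)|
              * ‖(p : E3)‖ ^ 2
            ≤ κ / (2 * N) * (c ^ n * M * ((N : ℝ) * D)) * ‖(p : E3)‖ ^ 2 := by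
              have := mul_le_mul_of_nonneg_left hbnd (by positivity : (0:ℝ) ≤ κ / (2 * N))
              exact mul_le_mul_of_nonneg_right this hp2.le
          _ = c ^ (n+1) * M * ‖(p : E3)‖ ^ 2 := by rw [this]
      -- ℓ¹ bound for Φ'
      -- majorant
      set G : LatticePos → ℝ := fun p =>
        ∑' q : LatticePos, |W ((N : ℝ)⁻¹ • ((p : E3) - (q : E3)))| * |Φ q| with hGdef
      have hG0 : ∀ p, 0 ≤ G p := fun p => tsum_nonneg fun q => by positivity
      -- first piece: summable, tsum ≤ N*D
      have hL10 := L1R N hN W hDne zero_mem_lattice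
      have hzero : ∀ q : LatticePos, |W ((N : ℝ)⁻¹ • ((0:E3) - (q : E3)))| = |W ((N : ℝ)⁻¹ • (q : E3))| := by
        intro q
        rw [heq]
        simp
      have hb1sum : Summable (fun p : LatticePos => |W ((N : ℝ)⁻¹ • (p : E3))| / ‖(p : E3)‖ ^ 2) := by
        refine hL10.1.congr fun p => ?_
        rw [hzero p]
      have hb1tsum : ∑' p : LatticePos, |W ((N : ℝ)⁻¹ • (p : E3))| / ‖(p : E3)‖ ^ 2 ≤ (N : ℝ) * D := by
        refine le_trans (le_of_eq ?_) hL10.2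
        exact tsum_congr fun p => by rw [hzero p]
      -- second piece via ENNReal
      have hNDE : ENNReal.ofReal (N : ℝ) * DN N W = ENNReal.ofReal ((N : ℝ) * D) := by
        rw [ENNReal.ofReal_mul (by positivity), ENNReal.ofReal_toReal hDne]
      have hGsum : ∀ p : LatticePos, Summable (fun q : LatticePos =>
          |W ((N : ℝ)⁻¹ • ((p : E3) - (q : E3)))| * |Φ q| / ‖(p : E3)‖ ^ 2) := by
        intro p
        exact (hsumWΦabs p).div_const _
      have hE2 : ∑' p : LatticePos, ENNReal.ofReal (G p / ‖(p : E3)‖ ^ 2)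
          ≤ ENNReal.ofReal ((N : ℝ) * D * L) := by
        have step1 : ∀ p : LatticePos, ENNReal.ofReal (G p / ‖(p : E3)‖ ^ 2)
            = ∑' q : LatticePos, ENNReal.ofReal
                (|W ((N : ℝ)⁻¹ • ((p : E3) - (q : E3)))| * |Φ q| / ‖(p : E3)‖ ^ 2) := by
          intro p
          rw [hGdef]
          have : (∑' q : LatticePos, |W ((N : ℝ)⁻¹ • ((p : E3) - (q : E3)))| * |Φ q|) / ‖(p : E3)‖ ^ 2
              = ∑' q : LatticePos, |W ((N : ℝ)⁻¹ • ((p : E3) - (q : E3)))| * |Φ q| / ‖(p : E3)‖ ^ 2 :=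
            tsum_div_const.symm
          rw [this, ENNReal.ofReal_tsum_of_nonneg (fun q => by positivity) (hGsum p)]
        calc ∑' p : LatticePos, ENNReal.ofReal (G p / ‖(p : E3)‖ ^ 2)
            = ∑' (p : LatticePos) (q : LatticePos), ENNReal.ofReal
                (|W ((N : ℝ)⁻¹ • ((p : E3) - (q : E3)))| * |Φ q| / ‖(p : E3)‖ ^ 2) :=
              tsum_congr step1
          _ = ∑' (q : LatticePos) (p : LatticePos), ENNReal.ofReal
                (|W ((N : ℝ)⁻¹ • ((p : E3) - (q : E3)))| * |Φ q| / ‖(p : E3)‖ ^ 2) :=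
              ENNReal.tsum_comm
          _ ≤ ∑' (q : LatticePos), ENNReal.ofReal (|Φ q|) * ENNReal.ofReal ((N : ℝ) * D) := by
              refine ENNReal.tsum_le_tsum fun q => ?_
              have hinner : ∀ p : LatticePos,
                  ENNReal.ofReal (|W ((N : ℝ)⁻¹ • ((p : E3) - (q : E3)))| * |Φ q| / ‖(p : E3)‖ ^ 2)
                  = ENNReal.ofReal (|Φ q|) *
                    ENNReal.ofReal (|W ((N : ℝ)⁻¹ • ((q : E3) - (p : E3)))| / ‖(p : E3)‖ ^ 2) := by
                intro p
                rw [← ENNReal.ofReal_mul (abs_nonneg _)]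
                congr 1
                rw [heq (q:E3) (p:E3)]
                ring
              rw [tsum_congr hinner, ENNReal.tsum_mul_left]
              refine mul_le_mul_right ?_ _
              rw [← hNDE]
              exact L1E N hN W (q.2.1)
          _ = ENNReal.ofReal ((N : ℝ) * D) * ∑' q : LatticePos, ENNReal.ofReal (|Φ q|) := by
              rw [← ENNReal.tsum_mul_left]
              exact tsum_congr fun q => by ring
          _ = ENNReal.ofReal ((N : ℝ) * D) * ENNReal.ofReal (∑' q : LatticePos, |Φ q|) := by
              rw [ENNReal.ofReal_tsum_of_nonneg (fun q => abs_nonneg _) hΦsum]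
          _ ≤ ENNReal.ofReal ((N : ℝ) * D) * ENNReal.ofReal L := by
              exact mul_le_mul_right (ENNReal.ofReal_le_ofReal hΦL) _
          _ = ENNReal.ofReal ((N : ℝ) * D * L) := by
              rw [← ENNReal.ofReal_mul (by positivity)]
      have hE2top : (∑' p : LatticePos, ENNReal.ofReal (G p / ‖(p : E3)‖ ^ 2)) ≠ ⊤ :=
        (hE2.trans_lt ENNReal.ofReal_lt_top).ne
      have hb2sum : Summable (fun p : LatticePos => G p / ‖(p : E3)‖ ^ 2) := by
        have := ENNReal.summable_toReal hE2top
        refine this.congr fun p => ?_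
        exact ENNReal.toReal_ofReal (div_nonneg (hG0 p) (pow_nonneg (norm_nonneg _) 2))
      have hb2tsum : ∑' p : LatticePos, G p / ‖(p : E3)‖ ^ 2 ≤ (N : ℝ) * D * L := by
        have : ENNReal.ofReal (∑' p : LatticePos, G p / ‖(p : E3)‖ ^ 2)
            ≤ ENNReal.ofReal ((N : ℝ) * D * L) := by
          rw [ENNReal.ofReal_tsum_of_nonneg (fun p => div_nonneg (hG0 p) (pow_nonneg (norm_nonneg _) 2)) hb2sum]
          exact hE2
        exact (ENNReal.ofReal_le_ofReal_iff (mul_nonneg (mul_nonneg hNpos.le hD0) hL0)).mp this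
      -- combined majorant
      set h : LatticePos → ℝ := fun p =>
        (κ / 2) * (|W ((N : ℝ)⁻¹ • (p : E3))| / ‖(p : E3)‖ ^ 2)
          + (κ / (2 * N)) * (G p / ‖(p : E3)‖ ^ 2) with hhdef
      have hhsum : Summable h := (hb1sum.mul_left (κ/2)).add (hb2sum.mul_left (κ/(2*N)))
      have hhtsum : ∑' p : LatticePos, h p ≤ L := by
        rw [hhdef]
        rw [Summable.tsum_add (hb1sum.mul_left (κ/2)) (hb2sum.mul_left (κ/(2*N)))]
        rw [tsum_mul_left, tsum_mul_left]
        have h1 : (κ/2) * ∑' p : LatticePos, |W ((N : ℝ)⁻¹ • (p : E3))| / ‖(p : E3)‖ ^ 2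
            ≤ (κ/2) * ((N : ℝ) * D) := mul_le_mul_of_nonneg_left hb1tsum (by positivity)
        have h2 : (κ/(2*N)) * ∑' p : LatticePos, G p / ‖(p : E3)‖ ^ 2
            ≤ (κ/(2*N)) * ((N : ℝ) * D * L) := mul_le_mul_of_nonneg_left hb2tsum (by positivity)
        have e1 : (κ/2) * ((N : ℝ) * D) = κ * (N : ℝ) * D / 2 := by ring
        have e2 : (κ/(2*N)) * ((N : ℝ) * D * L) = c * L := by
          rw [hcdef]; field_simp
        calc (κ/2) * (∑' p : LatticePos, |W ((N : ℝ)⁻¹ • (p : E3))| / ‖(p : E3)‖ ^ 2)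
              + (κ/(2*N)) * ∑' p : LatticePos, G p / ‖(p : E3)‖ ^ 2
            ≤ κ * (N : ℝ) * D / 2 + c * L := by rw [← e1, ← e2]; exact add_le_add h1 h2
          _ = L := hLid
      have hΦ'maj : ∀ p : LatticePos, |Φ' p| ≤ h p := by
        intro p
        have hp2 : (0:ℝ) < ‖(p : E3)‖ ^ 2 := pow_pos (latticePos_norm_pos p) 2
        have hS1 : |∑' q : LatticePos, W ((N : ℝ)⁻¹ • ((p : E3) - (q : E3))) * Φ q| ≤ G p := by
          rw [hGdef]
          calc |∑' q : LatticePos, W ((N : ℝ)⁻¹ • ((p : E3) - (q : E3))) * Φ q|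
              ≤ ∑' q : LatticePos, |W ((N : ℝ)⁻¹ • ((p : E3) - (q : E3))) * Φ q| := by
                simpa only [Real.norm_eq_abs] using norm_tsum_le_tsum_norm (f := fun q : LatticePos =>
                  W ((N : ℝ)⁻¹ • ((p : E3) - (q : E3))) * Φ q)
                  (by refine ((hsumWΦabs p).congr fun q => ?_); rw [Real.norm_eq_abs, abs_mul])
            _ = ∑' q : LatticePos, |W ((N : ℝ)⁻¹ • ((p : E3) - (q : E3)))| * |Φ q| :=
                tsum_congr fun q => abs_mul _ _
        rw [hΦ'def]
        rw [abs_div, abs_of_pos hp2]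
        rw [hhdef]
        have : |(-(κ / 2) * W ((N : ℝ)⁻¹ • (p : E3))
            - (κ / (2 * N)) * ∑' q : LatticePos, W ((N : ℝ)⁻¹ • ((p : E3) - (q : E3))) * Φ q)|
            ≤ (κ / 2) * |W ((N : ℝ)⁻¹ • (p : E3))| + (κ / (2 * N)) * G p := by
          calc |(-(κ / 2) * W ((N : ℝ)⁻¹ • (p : E3))
              - (κ / (2 * N)) * ∑' q : LatticePos, W ((N : ℝ)⁻¹ • ((p : E3) - (q : E3))) * Φ q)|
              ≤ |(-(κ / 2) * W ((N : ℝ)⁻¹ • (p : E3)))|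
                + |(κ / (2 * N)) * ∑' q : LatticePos, W ((N : ℝ)⁻¹ • ((p : E3) - (q : E3))) * Φ q| :=
                abs_sub _ _
            _ = (κ / 2) * |W ((N : ℝ)⁻¹ • (p : E3))|
                + (κ / (2 * N)) * |∑' q : LatticePos, W ((N : ℝ)⁻¹ • ((p : E3) - (q : E3))) * Φ q| := by
                rw [abs_mul, abs_mul, abs_neg, abs_of_pos (by positivity : (0:ℝ) < κ/2),
                  abs_of_pos (by positivity : (0:ℝ) < κ/(2*N))]
            _ ≤ (κ / 2) * |W ((N : ℝ)⁻¹ • (p : E3))| + (κ / (2 * N)) * G p := by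
                have := mul_le_mul_of_nonneg_left hS1 (by positivity : (0:ℝ) ≤ κ/(2*N))
                linarith
        calc |(-(κ / 2) * W ((N : ℝ)⁻¹ • (p : E3))
            - (κ / (2 * N)) * ∑' q : LatticePos, W ((N : ℝ)⁻¹ • ((p : E3) - (q : E3))) * Φ q)|
            / ‖(p : E3)‖ ^ 2
            ≤ ((κ / 2) * |W ((N : ℝ)⁻¹ • (p : E3))| + (κ / (2 * N)) * G p) / ‖(p : E3)‖ ^ 2 := by
              gcongr
          _ = (κ / 2) * (|W ((N : ℝ)⁻¹ • (p : E3))| / ‖(p : E3)‖ ^ 2)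
              + (κ / (2 * N)) * (G p / ‖(p : E3)‖ ^ 2) := by ring
      have hΦ'sum : Summable (fun p : LatticePos => |Φ' p|) :=
        Summable.of_nonneg_of_le (fun p => abs_nonneg _) hΦ'maj hhsum
      have hΦ'tsum : ∑' p : LatticePos, |Φ' p| ≤ L :=
        le_trans (Summable.tsum_le_tsum hΦ'maj hΦ'sum hhsum) hhtsum
      exact ⟨Φ', hΦ'sum, hΦ'tsum, hrem⟩
  -- conclude
  have hfin : ∀ F : Finset LatticePos, ∑ p ∈ F, |φ p| ≤ L := by
    intro F
    set K : ℝ := ∑ p ∈ F, M / ‖(p : E3)‖ ^ 2 with hKdef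
    have hK0 : 0 ≤ K := Finset.sum_nonneg fun p _ => by positivity
    have hstep : ∀ n : ℕ, ∑ p ∈ F, |φ p| ≤ L + c ^ n * K := by
      intro n
      obtain ⟨Φ, hΦsum, hΦL, hΦrem⟩ := key n
      calc ∑ p ∈ F, |φ p| ≤ ∑ p ∈ F, (|Φ p| + |φ p - Φ p|) := by
            refine Finset.sum_le_sum fun p _ => ?_
            calc |φ p| = |Φ p + (φ p - Φ p)| := by ring_nf
              _ ≤ |Φ p| + |φ p - Φ p| := abs_add_le _ _
        _ = ∑ p ∈ F, |Φ p| + ∑ p ∈ F, |φ p - Φ p| := Finset.sum_add_distrib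
        _ ≤ L + c ^ n * K := by
            refine add_le_add ?_ ?_
            · exact le_trans (Summable.sum_le_tsum F (fun p _ => abs_nonneg _) hΦsum) hΦL
            · rw [hKdef, Finset.mul_sum]
              refine Finset.sum_le_sum fun p _ => ?_
              calc |φ p - Φ p| ≤ c ^ n * M / ‖(p : E3)‖ ^ 2 := hΦrem p
                _ = c ^ n * (M / ‖(p : E3)‖ ^ 2) := by ring
    have htend : Filter.Tendsto (fun n : ℕ => L + c ^ n * K) Filter.atTop (nhds L) := by
      have h1 : Filter.Tendsto (fun n : ℕ => c ^ n) Filter.atTop (nhds 0) :=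
        tendsto_pow_atTop_nhds_zero_of_lt_one hc0 hc1
      have h2 : Filter.Tendsto (fun n : ℕ => L + c ^ n * K) Filter.atTop (nhds (L + 0 * K)) :=
        (Filter.Tendsto.const_add L ((h1.mul_const K)))
      simpa using h2
    exact ge_of_tendsto' htend hstep
  have hφsum : Summable (fun p : LatticePos => |φ p|) :=
    summable_of_sum_le (fun p => abs_nonneg _) hfin
  have hφtsum : ∑' p : LatticePos, |φ p| ≤ L := Summable.tsum_le_of_sum_le hφsum hfin
  refine ⟨hφsum, hφtsum, ⟨D / (2 - κ * D), div_nonneg hD0 h2κD.le, ?_⟩⟩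
  refine hφtsum.trans (le_of_eq ?_)
  rw [hLdef]; ring
end
end

section
/- Let N ≥ 1 be an integer, κ > 0, and let W : ℝ³ → ℝ be bounded with D_N(W) < ∞ and κ·D_N(W) < 2, and let φ : Λ₊ → ℝ be the solution of the discrete scattering equation with sup_{p∈Λ₊}|p|²·|φ(p)| < ∞. Define 4π·a_N := (κ/2)·( W(0) + (1/N)·Σ_{p∈Λ₊} W(p/N)·φ(p) ). Then the sum defining a_N converges absolutely and |4π·a_N − (κ/2)·W(0)| ≤ κ²·(sup_{x∈ℝ³}|W(x)|)·D⁰_N(W) / (2·(2 − κ·D_N(W))). In particular, a_N = (κ/(8π))·W(0) + O(κ²), uniformly in N. -/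
open scoped Real ENNReal
open MeasureTheory

noncomputable section

lemma neg_mem_lattice {p : E3} (hp : p ∈ Lattice2pi) : -p ∈ Lattice2pi := by
  obtain ⟨k, hk⟩ := hp
  exact ⟨fun i => -(k i), fun i => by
    rw [PiLp.neg_apply, hk i]; push_cast; ring⟩

lemma neg_mem_latticePos {p : E3} (hp : p ∈ LatticePos) : -p ∈ LatticePos :=
  ⟨neg_mem_lattice hp.1, neg_ne_zero.mpr hp.2⟩

def negEquiv : LatticePos ≃ LatticePos where
  toFun q := ⟨-(q : E3), neg_mem_latticePos q.2⟩
  invFun q := ⟨-(q : E3), neg_mem_latticePos q.2⟩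
  left_inv q := by simp
  right_inv q := by simp

lemma latticePos_nonempty : Nonempty LatticePos := by
  refine ⟨⟨EuclideanSpace.single 0 (2 * π), ⟨fun i => if i = 0 then 1 else 0, fun i => ?_⟩,
      ?_⟩⟩
  · rw [EuclideanSpace.single_apply]
    by_cases h : i = 0 <;> simp [h]
  · intro h
    have := congrFun (congrArg (fun v : E3 => (v : Fin 3 → ℝ)) h) 0
    simp [EuclideanSpace.single_apply] at this

set_option maxHeartbeats 1000000 in
/-- With `4π·a_N := (κ/2)·(W(0) + (1/N)·Σ_{p∈Λ₊} W(p/N)·φ(p))`, the sum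
converges absolutely and
`|4π·a_N − (κ/2)·W(0)| ≤ κ²·sup|W|·D⁰_N(W)/(2·(2 − κ·D_N(W)))`;
in particular `a_N = (κ/(8π))·W(0) + O(κ²)`. -/
theorem statement9 (N : ℕ) (hN : 1 ≤ N) (κ : ℝ) (hκ : 0 < κ)
    (W : E3 → ℝ) (hWbdd : BddAbove (Set.range fun x => |W x|))
    (hD : DN N W < ⊤) (hκD : ENNReal.ofReal κ * DN N W < 2)
    (φ : LatticePos → ℝ) (hφ : SolvesScatEq N κ W φ)
    (hS : BddAbove (Set.range fun p : LatticePos => ‖(p : E3)‖ ^ 2 * |φ p|)) :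
    Summable (fun p : LatticePos => |W ((N : ℝ)⁻¹ • (p : E3)) * φ p|) ∧
    ∀ aN : ℝ,
      4 * π * aN
          = (κ / 2) * (W 0 + (1 / (N : ℝ)) * ∑' p : LatticePos, W ((N : ℝ)⁻¹ • (p : E3)) * φ p) →
      |4 * π * aN - (κ / 2) * W 0|
          ≤ κ ^ 2 * (⨆ x : E3, |W x|) * (D0N N W).toReal / (2 * (2 - κ * (DN N W).toReal)) ∧
      ∃ C : ℝ, 0 ≤ C ∧ |aN - (κ / (8 * π)) * W 0| ≤ C * κ ^ 2 := by
  have hNe : Nonempty LatticePos := latticePos_nonempty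
  have hN0 : (0:ℝ) < N := by exact_mod_cast Nat.pos_of_ne_zero (by omega)
  have hDtop : DN N W ≠ ⊤ := hD.ne
  set M := ⨆ x : E3, |W x| with hMdef
  have hMW : ∀ x, |W x| ≤ M := fun x => le_ciSup hWbdd x
  have hM0 : 0 ≤ M := le_trans (abs_nonneg _) (hMW 0)
  set D := (DN N W).toReal with hDdef
  have hDnn : 0 ≤ D := ENNReal.toReal_nonneg
  have hκD2 : κ * D < 2 := by
    have hne : ENNReal.ofReal κ * DN N W ≠ ⊤ := ENNReal.mul_ne_top ENNReal.ofReal_ne_top hDtop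
    have h := (ENNReal.toReal_lt_toReal hne (by norm_num)).mpr hκD
    rw [ENNReal.toReal_mul, ENNReal.toReal_ofReal hκ.le] at h
    simpa using h
  have hpos : (0:ℝ) < 2 - κ * D := by linarith
  -- per-p summability from DN
  have key : ∀ p : E3, p ∈ Lattice2pi →
      Summable (fun q : LatticePos => |W ((N:ℝ)⁻¹ • (p - (q:E3)))| / ‖(q:E3)‖ ^ 2) ∧
      ∑' q : LatticePos, |W ((N:ℝ)⁻¹ • (p - (q:E3)))| / ‖(q:E3)‖ ^ 2 ≤ N * D := by
    intro p hp
    set f : LatticePos → ℝ := fun q =>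
      (1 / (N:ℝ) ^ 3) * (|W ((N:ℝ)⁻¹ • (p - (q:E3)))| * ((N:ℝ) / ‖(q:E3)‖) ^ 2) with hfdef
    have hf0 : ∀ q, 0 ≤ f q := fun q => by positivity
    have hfen : (∑' q : LatticePos, ENNReal.ofReal (f q)) ≤ DN N W :=
      le_iSup₂ (f := fun p (_ : p ∈ Lattice2pi) => ∑' q : LatticePos, ENNReal.ofReal
        ((1 / (N:ℝ) ^ 3) * (|W ((N:ℝ)⁻¹ • (p - (q:E3)))| * ((N:ℝ) / ‖(q:E3)‖) ^ 2))) p hp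
    have hfen' : (∑' q : LatticePos, ENNReal.ofReal (f q)) ≠ ⊤ := (lt_of_le_of_lt hfen hD).ne
    have hfs : Summable f := by
      have h := ENNReal.summable_toReal hfen'
      refine h.congr fun q => ?_
      rw [ENNReal.toReal_ofReal (hf0 q)]
    have hfsum : ∑' q, f q ≤ D := by
      rw [hDdef, ← ENNReal.toReal_ofReal (tsum_nonneg hf0), ENNReal.ofReal_tsum_of_nonneg hf0 hfs]
      exact ENNReal.toReal_mono hDtop hfen
    have hrel : ∀ q : LatticePos, |W ((N:ℝ)⁻¹ • (p - (q:E3)))| / ‖(q:E3)‖ ^ 2 = N * f q := by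
      intro q
      have hq : ‖(q:E3)‖ ≠ 0 := norm_ne_zero_iff.mpr q.2.2
      rw [hfdef]
      field_simp
    constructor
    · exact (hfs.mul_left (N:ℝ)).congr fun q => (hrel q).symm
    · calc ∑' q : LatticePos, |W ((N:ℝ)⁻¹ • (p - (q:E3)))| / ‖(q:E3)‖ ^ 2
          = ∑' q : LatticePos, (N:ℝ) * f q := tsum_congr hrel
        _ = (N:ℝ) * ∑' q, f q := tsum_mul_left
        _ ≤ (N:ℝ) * D := mul_le_mul_of_nonneg_left hfsum hN0.le
  -- D0N ≤ DN via the negation symmetry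
  have hD0eq : D0N N W = ∑' q : LatticePos, ENNReal.ofReal
      ((1 / (N:ℝ) ^ 3) * (|W ((N:ℝ)⁻¹ • ((0:E3) - (q:E3)))| * ((N:ℝ) / ‖(q:E3)‖) ^ 2)) := by
    rw [D0N, ← negEquiv.tsum_eq (fun q : LatticePos => ENNReal.ofReal
      ((1 / (N:ℝ) ^ 3) * (|W ((N:ℝ)⁻¹ • ((0:E3) - (q:E3)))| * ((N:ℝ) / ‖(q:E3)‖) ^ 2)))]
    refine tsum_congr fun q => ?_
    simp [negEquiv, zero_sub, neg_neg]
  have hD0leD : D0N N W ≤ DN N W := by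
    rw [hD0eq]
    exact le_iSup₂ (f := fun p (_ : p ∈ Lattice2pi) => ∑' q : LatticePos, ENNReal.ofReal
      ((1 / (N:ℝ) ^ 3) * (|W ((N:ℝ)⁻¹ • (p - (q:E3)))| * ((N:ℝ) / ‖(q:E3)‖) ^ 2)))
      (0:E3) zero_mem_lattice
  have hD0top : D0N N W ≠ ⊤ := (lt_of_le_of_lt hD0leD hD).ne
  set D0 := (D0N N W).toReal with hD0def
  have hD0nn : 0 ≤ D0 := ENNReal.toReal_nonneg
  -- the real version of D0
  set g0 : LatticePos → ℝ := fun q =>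
    (1 / (N:ℝ) ^ 3) * (|W ((N:ℝ)⁻¹ • (q:E3))| * ((N:ℝ) / ‖(q:E3)‖) ^ 2) with hg0def
  have hg00 : ∀ q, 0 ≤ g0 q := fun q => by positivity
  have hg0s : Summable g0 := by
    have h := ENNReal.summable_toReal (f := fun q : LatticePos => ENNReal.ofReal (g0 q))
      (by rw [← D0N]; exact hD0top)
    refine h.congr fun q => ?_
    rw [ENNReal.toReal_ofReal (hg00 q)]
  have hg0sum : ∑' q, g0 q = D0 := by
    rw [hD0def, D0N, ← ENNReal.ofReal_tsum_of_nonneg hg00 hg0s,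
      ENNReal.toReal_ofReal (tsum_nonneg hg00)]
  have hrel0 : ∀ q : LatticePos, |W ((N:ℝ)⁻¹ • (q:E3))| / ‖(q:E3)‖ ^ 2 = N * g0 q := by
    intro q
    have hq : ‖(q:E3)‖ ≠ 0 := norm_ne_zero_iff.mpr q.2.2
    rw [hg0def]
    field_simp
  have hh0s : Summable (fun q : LatticePos => |W ((N:ℝ)⁻¹ • (q:E3))| / ‖(q:E3)‖ ^ 2) :=
    (hg0s.mul_left (N:ℝ)).congr fun q => (hrel0 q).symm
  have hh0sum : ∑' q : LatticePos, |W ((N:ℝ)⁻¹ • (q:E3))| / ‖(q:E3)‖ ^ 2 = N * D0 := by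
    calc ∑' q : LatticePos, |W ((N:ℝ)⁻¹ • (q:E3))| / ‖(q:E3)‖ ^ 2
        = ∑' q : LatticePos, (N:ℝ) * g0 q := tsum_congr hrel0
      _ = (N:ℝ) * ∑' q, g0 q := tsum_mul_left
      _ = (N:ℝ) * D0 := by rw [hg0sum]
  -- sup bound S
  set S := ⨆ p : LatticePos, ‖(p:E3)‖ ^ 2 * |φ p| with hSdef
  have hSle : ∀ p : LatticePos, ‖(p:E3)‖ ^ 2 * |φ p| ≤ S := fun p => le_ciSup hS p
  have hS0 : 0 ≤ S := le_trans (by positivity) (hSle (Classical.arbitrary _))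
  have hφle : ∀ q : LatticePos, |φ q| ≤ S / ‖(q:E3)‖ ^ 2 := by
    intro q
    have hq : (0:ℝ) < ‖(q:E3)‖ ^ 2 := by
      have := norm_pos_iff.mpr q.2.2
      positivity
    rw [le_div_iff₀ hq]
    calc |φ q| * ‖(q:E3)‖ ^ 2 = ‖(q:E3)‖ ^ 2 * |φ q| := mul_comm _ _
      _ ≤ S := hSle q
  -- pointwise bound on inner sums
  have hinner : ∀ p : LatticePos,
      ∑' q : LatticePos, |W ((N:ℝ)⁻¹ • ((p:E3) - (q:E3))) * φ q| ≤ S * ((N:ℝ) * D) := by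
    intro p
    obtain ⟨hsum, hle⟩ := key (p:E3) p.2.1
    have h1 : ∀ q : LatticePos, |W ((N:ℝ)⁻¹ • ((p:E3) - (q:E3))) * φ q|
        ≤ S * (|W ((N:ℝ)⁻¹ • ((p:E3) - (q:E3)))| / ‖(q:E3)‖ ^ 2) := by
      intro q
      rw [abs_mul]
      calc |W ((N:ℝ)⁻¹ • ((p:E3) - (q:E3)))| * |φ q|
          ≤ |W ((N:ℝ)⁻¹ • ((p:E3) - (q:E3)))| * (S / ‖(q:E3)‖ ^ 2) :=
            mul_le_mul_of_nonneg_left (hφle q) (abs_nonneg _)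
        _ = S * (|W ((N:ℝ)⁻¹ • ((p:E3) - (q:E3)))| / ‖(q:E3)‖ ^ 2) := by ring
    calc ∑' q : LatticePos, |W ((N:ℝ)⁻¹ • ((p:E3) - (q:E3))) * φ q|
        ≤ ∑' q : LatticePos, S * (|W ((N:ℝ)⁻¹ • ((p:E3) - (q:E3)))| / ‖(q:E3)‖ ^ 2) :=
          Summable.tsum_le_tsum h1 (hφ p).1 (hsum.mul_left S)
      _ = S * ∑' q : LatticePos, |W ((N:ℝ)⁻¹ • ((p:E3) - (q:E3)))| / ‖(q:E3)‖ ^ 2 :=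
          tsum_mul_left
      _ ≤ S * ((N:ℝ) * D) := mul_le_mul_of_nonneg_left hle hS0
  -- recursion for S
  have hSrec : S ≤ κ / 2 * M + κ / 2 * (S * D) := by
    apply ciSup_le
    intro p
    obtain ⟨hsum, heq⟩ := hφ p
    have habs : ‖(p:E3)‖ ^ 2 * |φ p| = |‖(p:E3)‖ ^ 2 * φ p| := by
      rw [abs_mul, abs_of_nonneg (by positivity : (0:ℝ) ≤ ‖(p:E3)‖ ^ 2)]
    have heq' : ‖(p:E3)‖ ^ 2 * φ p = -(κ / 2) * W ((N:ℝ)⁻¹ • (p:E3))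
        - (κ / (2 * N)) * ∑' q : LatticePos, W ((N:ℝ)⁻¹ • ((p:E3) - (q:E3))) * φ q := by
      linarith [heq]
    have hb1 : |∑' q : LatticePos, W ((N:ℝ)⁻¹ • ((p:E3) - (q:E3))) * φ q| ≤ S * ((N:ℝ) * D) := by
      refine le_trans ?_ (hinner p)
      have h := norm_tsum_le_tsum_norm
        (f := fun q : LatticePos => W ((N:ℝ)⁻¹ • ((p:E3) - (q:E3))) * φ q)
        (by simp only [Real.norm_eq_abs]; exact hsum)
      simp only [Real.norm_eq_abs] at h
      exact h
    rw [habs, heq']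
    calc |(-(κ / 2) * W ((N:ℝ)⁻¹ • (p:E3)))
          - (κ / (2 * N)) * ∑' q : LatticePos, W ((N:ℝ)⁻¹ • ((p:E3) - (q:E3))) * φ q|
        ≤ |(-(κ / 2) * W ((N:ℝ)⁻¹ • (p:E3)))|
          + |(κ / (2 * N)) * ∑' q : LatticePos, W ((N:ℝ)⁻¹ • ((p:E3) - (q:E3))) * φ q| :=
          abs_sub _ _
      _ = κ / 2 * |W ((N:ℝ)⁻¹ • (p:E3))|
          + κ / (2 * N) * |∑' q : LatticePos, W ((N:ℝ)⁻¹ • ((p:E3) - (q:E3))) * φ q| := by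
          rw [abs_mul, abs_mul, abs_neg, abs_of_nonneg (by positivity : (0:ℝ) ≤ κ / 2),
            abs_of_nonneg (by positivity : (0:ℝ) ≤ κ / (2 * (N:ℝ)))]
      _ ≤ κ / 2 * M + κ / (2 * N) * (S * ((N:ℝ) * D)) :=
          add_le_add (mul_le_mul_of_nonneg_left (hMW _) (by positivity))
            (mul_le_mul_of_nonneg_left hb1 (by positivity))
      _ = κ / 2 * M + κ / 2 * (S * D) := by
          field_simp
  have hSfinal : S * (2 - κ * D) ≤ κ * M := by nlinarith [hSrec]
  -- summability of the target series
  have htarget : ∀ p : LatticePos, |W ((N:ℝ)⁻¹ • (p:E3)) * φ p|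
      ≤ S * (|W ((N:ℝ)⁻¹ • (p:E3))| / ‖(p:E3)‖ ^ 2) := by
    intro p
    rw [abs_mul]
    calc |W ((N:ℝ)⁻¹ • (p:E3))| * |φ p|
        ≤ |W ((N:ℝ)⁻¹ • (p:E3))| * (S / ‖(p:E3)‖ ^ 2) :=
          mul_le_mul_of_nonneg_left (hφle p) (abs_nonneg _)
      _ = S * (|W ((N:ℝ)⁻¹ • (p:E3))| / ‖(p:E3)‖ ^ 2) := by ring
  have hsum0 : Summable (fun p : LatticePos => |W ((N:ℝ)⁻¹ • (p:E3)) * φ p|) :=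
    Summable.of_nonneg_of_le (fun p => abs_nonneg _) htarget (hh0s.mul_left S)
  have hTle : ∑' p : LatticePos, |W ((N:ℝ)⁻¹ • (p:E3)) * φ p| ≤ S * ((N:ℝ) * D0) := by
    calc ∑' p : LatticePos, |W ((N:ℝ)⁻¹ • (p:E3)) * φ p|
        ≤ ∑' p : LatticePos, S * (|W ((N:ℝ)⁻¹ • (p:E3))| / ‖(p:E3)‖ ^ 2) :=
          Summable.tsum_le_tsum htarget hsum0 (hh0s.mul_left S)
      _ = S * ∑' p : LatticePos, |W ((N:ℝ)⁻¹ • (p:E3))| / ‖(p:E3)‖ ^ 2 := tsum_mul_left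
      _ = S * ((N:ℝ) * D0) := by rw [hh0sum]
  refine ⟨hsum0, ?_⟩
  intro aN haN
  have hT : |∑' p : LatticePos, W ((N:ℝ)⁻¹ • (p:E3)) * φ p| ≤ S * ((N:ℝ) * D0) := by
    refine le_trans ?_ hTle
    have h := norm_tsum_le_tsum_norm
      (f := fun p : LatticePos => W ((N:ℝ)⁻¹ • (p:E3)) * φ p)
      (by simp only [Real.norm_eq_abs]; exact hsum0)
    simp only [Real.norm_eq_abs] at h
    exact h
  have hmain : |4 * π * aN - κ / 2 * W 0| ≤ κ ^ 2 * M * D0 / (2 * (2 - κ * D)) := by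
    have h1 : 4 * π * aN - κ / 2 * W 0
        = (κ / (2 * N)) * ∑' p : LatticePos, W ((N:ℝ)⁻¹ • (p:E3)) * φ p := by
      rw [haN]
      field_simp
      ring
    rw [h1, abs_mul, abs_of_nonneg (by positivity : (0:ℝ) ≤ κ / (2 * (N:ℝ)))]
    calc κ / (2 * N) * |∑' p : LatticePos, W ((N:ℝ)⁻¹ • (p:E3)) * φ p|
        ≤ κ / (2 * N) * (S * ((N:ℝ) * D0)) := mul_le_mul_of_nonneg_left hT (by positivity)
      _ = κ / 2 * S * D0 := by
          field_simp
      _ ≤ κ ^ 2 * M * D0 / (2 * (2 - κ * D)) := by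
          rw [le_div_iff₀ (by positivity : (0:ℝ) < 2 * (2 - κ * D))]
          calc κ / 2 * S * D0 * (2 * (2 - κ * D)) = κ * D0 * (S * (2 - κ * D)) := by ring
            _ ≤ κ * D0 * (κ * M) := mul_le_mul_of_nonneg_left hSfinal (mul_nonneg hκ.le hD0nn)
            _ = κ ^ 2 * M * D0 := by ring
  refine ⟨hmain, ⟨M * D0 / (2 * (2 - κ * D)) / (4 * π), ?_, ?_⟩⟩
  · have : (0:ℝ) ≤ M * D0 / (2 * (2 - κ * D)) := by positivity
    positivity
  · have hπ : (0:ℝ) < 4 * π := by positivity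
    have h2 : aN - κ / (8 * π) * W 0 = (4 * π * aN - κ / 2 * W 0) / (4 * π) := by
      field_simp
      ring
    rw [h2, abs_div, abs_of_pos hπ, div_le_iff₀ hπ]
    calc |4 * π * aN - κ / 2 * W 0| ≤ κ ^ 2 * M * D0 / (2 * (2 - κ * D)) := hmain
      _ = M * D0 / (2 * (2 - κ * D)) / (4 * π) * κ ^ 2 * (4 * π) := by
          field_simp
end
end

section
/- Let N ≥ 1 be an integer, κ > 0, and let W : ℝ³ → ℝ be bounded with D_N(W) < ∞ and κ·D_N(W) < 2. Define iteratively φ⁽⁰⁾(p) := −(κ/(2|p|²))·W(p/N) and φ⁽ᵏ⁺¹⁾(p) := −(κ/(2N|p|²))·Σ_{q∈Λ₊} W((p−q)/N)·φ⁽ᵏ⁾(q) for p ∈ Λ₊. Then: (i) for every k ≥ 0, sup_{p∈Λ₊} |p|²·|φ⁽ᵏ⁾(p)| ≤ (κ/2)·(sup_{x∈ℝ³}|W(x)|)·(κ·D_N(W)/2)^k; (ii) for every p ∈ Λ₊ the Born series Σ_{k≥0} φ⁽ᵏ⁾(p) converges absolutely; and (iii) the function φ(p) := Σ_{k≥0}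 φ⁽ᵏ⁾(p) is the unique solution of the discrete scattering equation with sup_{p∈Λ₊}|p|²·|φ(p)| < ∞. -/
open scoped Real ENNReal
open MeasureTheory

noncomputable section

/-- The Born iterates: `φ⁽⁰⁾(p) = −(κ/(2|p|²))·W(p/N)` and
`φ⁽ᵏ⁺¹⁾(p) = −(κ/(2N|p|²))·Σ_{q∈Λ₊} W((p−q)/N)·φ⁽ᵏ⁾(q)`. -/
def bornSeries (N : ℕ) (κ : ℝ) (W : E3 → ℝ) : ℕ → (LatticePos → ℝ)
  | 0 => fun p => -(κ / (2 * ‖(p : E3)‖ ^ 2)) * W ((N : ℝ)⁻¹ • (p : E3))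
  | k + 1 => fun p =>
      -(κ / (2 * N * ‖(p : E3)‖ ^ 2)) *
        ∑' q : LatticePos, W ((N : ℝ)⁻¹ • ((p : E3) - (q : E3))) * bornSeries N κ W k q

lemma norm_pos (p : LatticePos) : 0 < ‖(p : E3)‖ := by
  simpa [norm_pos_iff] using p.2.2

lemma sub_mem_lattice {p q : E3} (hp : p ∈ Lattice2pi) (hq : q ∈ Lattice2pi) :
    p - q ∈ Lattice2pi := by
  obtain ⟨k, hk⟩ := hp
  obtain ⟨l, hl⟩ := hq
  refine ⟨fun i => k i - l i, fun i => ?_⟩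
  have : (p - q) i = p i - q i := rfl
  rw [this, hk, hl]
  push_cast
  ring
variable {N : ℕ} {W : E3 → ℝ}

/-- the summand of `DN`. -/
def gN (N : ℕ) (W : E3 → ℝ) (p : E3) (q : LatticePos) : ℝ :=
  (1 / (N : ℝ) ^ 3) * (|W ((N : ℝ)⁻¹ • (p - (q : E3)))| * ((N : ℝ) / ‖(q : E3)‖) ^ 2)

lemma gN_nonneg (p : E3) (q : LatticePos) : 0 ≤ gN N W p q := by
  unfold gN; positivity

lemma tsum_ofReal_gN_le {p : E3} (hp : p ∈ Lattice2pi) :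
    ∑' q : LatticePos, ENNReal.ofReal (gN N W p q) ≤ DN N W := by
  exact le_iSup₂ (f := fun p (_ : p ∈ Lattice2pi) => ∑' q : LatticePos,
    ENNReal.ofReal (gN N W p q)) p hp

lemma summable_gN (hD : DN N W < ⊤) {p : E3} (hp : p ∈ Lattice2pi) :
    Summable (gN N W p) := by
  have h := (tsum_ofReal_gN_le (W := W) hp).trans_lt hD
  have := ENNReal.summable_toReal h.ne
  refine this.congr fun q => ?_
  rw [ENNReal.toReal_ofReal (gN_nonneg p q)]

lemma tsum_gN_le (hD : DN N W < ⊤) {p : E3} (hp : p ∈ Lattice2pi) :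
    ∑' q, gN N W p q ≤ (DN N W).toReal := by
  have h := tsum_ofReal_gN_le (W := W) (N := N) hp
  have := ENNReal.toReal_mono hD.ne h
  rwa [ENNReal.tsum_toReal_eq (fun q => ENNReal.ofReal_ne_top),
    funext fun q => ENNReal.toReal_ofReal (gN_nonneg (N := N) (W := W) p q)] at this

lemma abs_W_div_sq (hN : 1 ≤ N) (p : E3) (q : LatticePos) :
    |W ((N : ℝ)⁻¹ • (p - (q : E3)))| / ‖(q : E3)‖ ^ 2 = N * gN N W p q := by
  have hq := norm_pos q
  have hN' : (0:ℝ) < N := by exact_mod_cast hN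
  unfold gN
  field_simp

lemma key (hN : 1 ≤ N) (hD : DN N W < ⊤) {p : E3} (hp : p ∈ Lattice2pi)
    {f : LatticePos → ℝ} {C : ℝ} (hC : 0 ≤ C)
    (hf : ∀ q : LatticePos, ‖(q : E3)‖ ^ 2 * |f q| ≤ C) :
    Summable (fun q : LatticePos => |W ((N : ℝ)⁻¹ • (p - (q : E3))) * f q|) ∧
    ∑' q : LatticePos, |W ((N : ℝ)⁻¹ • (p - (q : E3))) * f q|
      ≤ C * N * (DN N W).toReal := by
  have hN' : (0:ℝ) < N := by exact_mod_cast hN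
  have hbound : ∀ q : LatticePos,
      |W ((N : ℝ)⁻¹ • (p - (q : E3))) * f q| ≤ C * (N * gN N W p q) := by
    intro q
    have hq := norm_pos q
    have h1 : |f q| ≤ C / ‖(q : E3)‖ ^ 2 := by
      rw [le_div_iff₀ (by positivity)]
      linarith [hf q, mul_comm (‖(q : E3)‖ ^ 2) |f q|]
    calc |W ((N : ℝ)⁻¹ • (p - (q : E3))) * f q|
        = |W ((N : ℝ)⁻¹ • (p - (q : E3)))| * |f q| := abs_mul _ _
      _ ≤ |W ((N : ℝ)⁻¹ • (p - (q : E3)))| * (C / ‖(q : E3)‖ ^ 2) := by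
          exact mul_le_mul_of_nonneg_left h1 (abs_nonneg _)
      _ = C * (|W ((N : ℝ)⁻¹ • (p - (q : E3)))| / ‖(q : E3)‖ ^ 2) := by ring
      _ = C * (N * gN N W p q) := by rw [abs_W_div_sq hN]
  have hsum : Summable (fun q : LatticePos => |W ((N : ℝ)⁻¹ • (p - (q : E3))) * f q|) :=
    Summable.of_nonneg_of_le (fun q => abs_nonneg _) hbound
      (((summable_gN hD hp).mul_left _).mul_left _)
  refine ⟨hsum, ?_⟩
  calc ∑' q : LatticePos, |W ((N : ℝ)⁻¹ • (p - (q : E3))) * f q|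
      ≤ ∑' q : LatticePos, C * (N * gN N W p q) :=
        Summable.tsum_le_tsum hbound hsum (((summable_gN hD hp).mul_left _).mul_left _)
    _ = C * N * ∑' q, gN N W p q := by
        rw [tsum_mul_left, tsum_mul_left]; ring
    _ ≤ C * N * (DN N W).toReal := by
        have := tsum_gN_le (W := W) hD hp
        exact mul_le_mul_of_nonneg_left this (by positivity)
variable {κ : ℝ}

lemma M_nonneg (hWbdd : BddAbove (Set.range fun x => |W x|)) : 0 ≤ ⨆ x : E3, |W x| :=
  le_trans (abs_nonneg _) (le_ciSup hWbdd 0)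

lemma bornBound (hN : 1 ≤ N) (hκ : 0 < κ) (hWbdd : BddAbove (Set.range fun x => |W x|))
    (hD : DN N W < ⊤) :
    ∀ (k : ℕ) (p : LatticePos),
      ‖(p : E3)‖ ^ 2 * |bornSeries N κ W k p|
        ≤ (κ / 2) * (⨆ x : E3, |W x|) * (κ * (DN N W).toReal / 2) ^ k := by
  set M := ⨆ x : E3, |W x| with hM
  have hM0 : 0 ≤ M := M_nonneg hWbdd
  have hN' : (0:ℝ) < N := by exact_mod_cast hN
  intro k
  induction k with
  | zero =>
    intro p
    have hq := norm_pos p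
    have hW : |W ((N : ℝ)⁻¹ • (p : E3))| ≤ M := le_ciSup hWbdd _
    rw [bornSeries]
    rw [abs_mul, abs_neg, abs_of_nonneg (by positivity)]
    rw [pow_zero, mul_one]
    calc ‖(p : E3)‖ ^ 2 * (κ / (2 * ‖(p : E3)‖ ^ 2) * |W ((N : ℝ)⁻¹ • (p : E3))|)
        = (κ / 2) * |W ((N : ℝ)⁻¹ • (p : E3))| := by field_simp
      _ ≤ (κ / 2) * M := by nlinarith
  | succ k ih =>
    intro p
    have hq := norm_pos p
    have hCk : 0 ≤ (κ / 2) * M * (κ * (DN N W).toReal / 2) ^ k := by positivity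
    obtain ⟨hsum, hts⟩ := key hN hD p.2.1 hCk ih
    set F : LatticePos → ℝ :=
      fun q => W ((N : ℝ)⁻¹ • ((p : E3) - (q : E3))) * bornSeries N κ W k q with hF
    have hsum' : Summable fun q => |F q| := hsum
    have hts' : ∑' q, |F q| ≤ (κ / 2) * M * (κ * (DN N W).toReal / 2) ^ k * N * (DN N W).toReal := hts
    rw [bornSeries, abs_mul, abs_neg, abs_of_nonneg (by positivity)]
    have habs : |∑' q, F q| ≤ ∑' q, |F q| := by
      have := norm_tsum_le_tsum_norm (f := F) (by simpa [Real.norm_eq_abs] using hsum')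
      simpa [Real.norm_eq_abs] using this
    calc ‖(p : E3)‖ ^ 2 * (κ / (2 * N * ‖(p : E3)‖ ^ 2) * |∑' q, F q|)
        = (κ / (2 * N)) * |∑' q, F q| := by field_simp
      _ ≤ (κ / (2 * N)) * ((κ / 2) * M * (κ * (DN N W).toReal / 2) ^ k * N * (DN N W).toReal) := by
          exact mul_le_mul_of_nonneg_left (habs.trans hts') (by positivity)
      _ = (κ / 2) * M * (κ * (DN N W).toReal / 2) ^ (k + 1) := by
          field_simp; ring

lemma r_lt_one (hκ : 0 < κ) (hD : DN N W < ⊤) (hκD : ENNReal.ofReal κ * DN N W < 2) :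
    κ * (DN N W).toReal / 2 < 1 := by
  have hne : ENNReal.ofReal κ * DN N W ≠ ⊤ := ENNReal.mul_ne_top ENNReal.ofReal_ne_top hD.ne
  have h2 : ((2 : ℝ≥0∞)).toReal = 2 := by simp
  have := (ENNReal.toReal_lt_toReal hne (by simp)).2 hκD
  rw [ENNReal.toReal_mul, ENNReal.toReal_ofReal hκ.le, h2] at this
  linarith

lemma r_nonneg (hκ : 0 < κ) : 0 ≤ κ * (DN N W).toReal / 2 := by positivity

lemma bornSummable (hN : 1 ≤ N) (hκ : 0 < κ) (hWbdd : BddAbove (Set.range fun x => |W x|))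
    (hD : DN N W < ⊤) (hκD : ENNReal.ofReal κ * DN N W < 2) (p : LatticePos) :
    Summable (fun k : ℕ => |bornSeries N κ W k p|) := by
  have hq := norm_pos p
  have hM0 : 0 ≤ ⨆ x : E3, |W x| := M_nonneg hWbdd
  refine Summable.of_nonneg_of_le (fun k => abs_nonneg _) (fun k => ?_)
    (((summable_geometric_of_lt_one (r_nonneg hκ) (r_lt_one hκ hD hκD)).mul_left
      ((κ / 2) * (⨆ x : E3, |W x|) / ‖(p : E3)‖ ^ 2)))
  have := bornBound hN hκ hWbdd hD k p
  rw [div_mul_eq_mul_div, le_div_iff₀ (by positivity)]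
  linarith [this, mul_comm (‖(p : E3)‖ ^ 2) |bornSeries N κ W k p|]

lemma sumBound (hN : 1 ≤ N) (hκ : 0 < κ) (hWbdd : BddAbove (Set.range fun x => |W x|))
    (hD : DN N W < ⊤) (hκD : ENNReal.ofReal κ * DN N W < 2) (p : LatticePos) :
    ‖(p : E3)‖ ^ 2 * |∑' k : ℕ, bornSeries N κ W k p|
      ≤ (κ / 2) * (⨆ x : E3, |W x|) * (1 - κ * (DN N W).toReal / 2)⁻¹ := by
  set r := κ * (DN N W).toReal / 2 with hr
  have hr0 := r_nonneg (W := W) (N := N) hκ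
  have hr1 := r_lt_one hκ hD hκD
  have hs := bornSummable hN hκ hWbdd hD hκD p
  have habs : |∑' k : ℕ, bornSeries N κ W k p| ≤ ∑' k : ℕ, |bornSeries N κ W k p| := by
    have := norm_tsum_le_tsum_norm (f := fun k => bornSeries N κ W k p)
      (by simpa [Real.norm_eq_abs] using hs)
    simpa [Real.norm_eq_abs] using this
  calc ‖(p : E3)‖ ^ 2 * |∑' k : ℕ, bornSeries N κ W k p|
      ≤ ‖(p : E3)‖ ^ 2 * ∑' k : ℕ, |bornSeries N κ W k p| :=
        mul_le_mul_of_nonneg_left habs (by positivity)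
    _ = ∑' k : ℕ, ‖(p : E3)‖ ^ 2 * |bornSeries N κ W k p| := (tsum_mul_left).symm
    _ ≤ ∑' k : ℕ, (κ / 2) * (⨆ x : E3, |W x|) * r ^ k := by
        refine Summable.tsum_le_tsum (fun k => bornBound hN hκ hWbdd hD k p) (hs.mul_left _)
          ((summable_geometric_of_lt_one hr0 hr1).mul_left _)
    _ = (κ / 2) * (⨆ x : E3, |W x|) * (1 - r)⁻¹ := by
        rw [tsum_mul_left, tsum_geometric_of_lt_one hr0 hr1]
lemma scat_sol (hN : 1 ≤ N) (hκ : 0 < κ) (hWbdd : BddAbove (Set.range fun x => |W x|))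
    (hD : DN N W < ⊤) (hκD : ENNReal.ofReal κ * DN N W < 2) :
    SolvesScatEq N κ W (fun p => ∑' k : ℕ, bornSeries N κ W k p) := by
  set r := κ * (DN N W).toReal / 2 with hr
  have hr0 := r_nonneg (W := W) (N := N) hκ
  have hr1 := r_lt_one hκ hD hκD
  have hM0 : 0 ≤ ⨆ x : E3, |W x| := M_nonneg hWbdd
  have hN' : (0:ℝ) < N := by exact_mod_cast hN
  set Cφ := (κ / 2) * (⨆ x : E3, |W x|) * (1 - r)⁻¹ with hCφ
  have hCφ0 : 0 ≤ Cφ :=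
    mul_nonneg (mul_nonneg (by positivity) hM0) (inv_nonneg.2 (by linarith))
  intro p
  have hq := norm_pos p
  obtain ⟨hsum, _⟩ := key hN hD p.2.1 hCφ0 (fun q => sumBound hN hκ hWbdd hD hκD q)
  refine ⟨hsum, ?_⟩
  -- double summability
  set T : ℕ × LatticePos → ℝ :=
    fun x => W ((N : ℝ)⁻¹ • ((p : E3) - (x.2 : E3))) * bornSeries N κ W x.1 x.2 with hT
  have hTsum : Summable T := by
    refine Summable.of_abs (Summable.of_nonneg_of_le (fun x => abs_nonneg _) (fun x => ?_)
      ((Summable.mul_of_nonneg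
        ((summable_geometric_of_lt_one hr0 hr1).mul_left ((κ / 2) * (⨆ x : E3, |W x|) * N))
        (summable_gN hD p.2.1)
        (fun k => by positivity) (fun q => gN_nonneg _ _))))
    obtain ⟨k, q⟩ := x
    have hb := bornBound hN hκ hWbdd hD k q
    have hq2 := norm_pos q
    have h1 : |bornSeries N κ W k q| ≤ ((κ / 2) * (⨆ x : E3, |W x|) * r ^ k) / ‖(q : E3)‖ ^ 2 := by
      rw [le_div_iff₀ (by positivity)]
      linarith [mul_comm (‖(q : E3)‖ ^ 2) |bornSeries N κ W k q|]
    calc |T (k, q)| = |W ((N : ℝ)⁻¹ • ((p : E3) - (q : E3)))| * |bornSeries N κ W k q| :=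
          abs_mul _ _
      _ ≤ |W ((N : ℝ)⁻¹ • ((p : E3) - (q : E3)))| *
            (((κ / 2) * (⨆ x : E3, |W x|) * r ^ k) / ‖(q : E3)‖ ^ 2) :=
          mul_le_mul_of_nonneg_left h1 (abs_nonneg _)
      _ = ((κ / 2) * (⨆ x : E3, |W x|) * r ^ k) *
            (|W ((N : ℝ)⁻¹ • ((p : E3) - (q : E3)))| / ‖(q : E3)‖ ^ 2) := by ring
      _ = (κ / 2) * (⨆ x : E3, |W x|) * N * r ^ k * gN N W (p : E3) q := by
          rw [abs_W_div_sq hN]; ring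
  -- exchange sums
  have hswap : ∑' q : LatticePos, ∑' k : ℕ, T (k, q) = ∑' k : ℕ, ∑' q : LatticePos, T (k, q) :=
    Summable.tsum_comm (f := fun k q => T (k, q)) (by exact hTsum)
  have hinner : ∀ q : LatticePos,
      W ((N : ℝ)⁻¹ • ((p : E3) - (q : E3))) * ∑' k : ℕ, bornSeries N κ W k q
        = ∑' k : ℕ, T (k, q) := fun q => tsum_mul_left.symm
  have hSk : ∀ k : ℕ, (κ / (2 * N)) * ∑' q : LatticePos, T (k, q)
      = -(‖(p : E3)‖ ^ 2 * bornSeries N κ W (k + 1) p) := by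
    intro k
    have : bornSeries N κ W (k + 1) p
        = -(κ / (2 * N * ‖(p : E3)‖ ^ 2)) * ∑' q : LatticePos, T (k, q) := rfl
    rw [this]
    field_simp
  -- summability of k ↦ bornSeries k p
  have hbs : Summable (fun k : ℕ => bornSeries N κ W k p) :=
    (bornSummable hN hκ hWbdd hD hκD p).of_abs
  have hshift : Summable (fun k : ℕ => ‖(p : E3)‖ ^ 2 * bornSeries N κ W (k + 1) p) :=
    ((summable_nat_add_iff 1).2 hbs).mul_left _
  calc ‖(p : E3)‖ ^ 2 * (∑' k : ℕ, bornSeries N κ W k p)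
        + (κ / (2 * N)) * ∑' q : LatticePos,
            W ((N : ℝ)⁻¹ • ((p : E3) - (q : E3))) * ∑' k : ℕ, bornSeries N κ W k q
      = ‖(p : E3)‖ ^ 2 * (∑' k : ℕ, bornSeries N κ W k p)
        + (κ / (2 * N)) * ∑' k : ℕ, ∑' q : LatticePos, T (k, q) := by
        rw [tsum_congr hinner, hswap]
    _ = ‖(p : E3)‖ ^ 2 * (∑' k : ℕ, bornSeries N κ W k p)
        + ∑' k : ℕ, (κ / (2 * N)) * ∑' q : LatticePos, T (k, q) := by
        rw [tsum_mul_left]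
    _ = ‖(p : E3)‖ ^ 2 * (∑' k : ℕ, bornSeries N κ W k p)
        - ‖(p : E3)‖ ^ 2 * ∑' k : ℕ, bornSeries N κ W (k + 1) p := by
        rw [tsum_congr hSk, tsum_neg, tsum_mul_left]
        ring
    _ = ‖(p : E3)‖ ^ 2 * bornSeries N κ W 0 p := by
        rw [Summable.tsum_eq_zero_add hbs]
        ring
    _ = -(κ / 2) * W ((N : ℝ)⁻¹ • (p : E3)) := by
        rw [show bornSeries N κ W 0 p
            = -(κ / (2 * ‖(p : E3)‖ ^ 2)) * W ((N : ℝ)⁻¹ • (p : E3)) from rfl]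
        field_simp

lemma uniq (hN : 1 ≤ N) (hκ : 0 < κ) (hD : DN N W < ⊤)
    (hκD : ENNReal.ofReal κ * DN N W < 2) {ψ χ : LatticePos → ℝ}
    (hψb : BddAbove (Set.range fun p : LatticePos => ‖(p : E3)‖ ^ 2 * |ψ p|))
    (hχb : BddAbove (Set.range fun p : LatticePos => ‖(p : E3)‖ ^ 2 * |χ p|))
    (hψ : SolvesScatEq N κ W ψ) (hχ : SolvesScatEq N κ W χ) : ψ = χ := by
  have := latticePos_nonempty
  set r := κ * (DN N W).toReal / 2 with hr
  have hr0 := r_nonneg (W := W) (N := N) hκ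
  have hr1 := r_lt_one hκ hD hκD
  have hN' : (0:ℝ) < N := by exact_mod_cast hN
  set δ : LatticePos → ℝ := fun p => ψ p - χ p with hδ
  obtain ⟨Cψ, hCψ⟩ := hψb
  obtain ⟨Cχ, hCχ⟩ := hχb
  have hδbdd : BddAbove (Set.range fun p : LatticePos => ‖(p : E3)‖ ^ 2 * |δ p|) := by
    refine ⟨Cψ + Cχ, fun y hy => ?_⟩
    obtain ⟨p, rfl⟩ := hy
    have h1 : ‖(p : E3)‖ ^ 2 * |ψ p| ≤ Cψ := hCψ ⟨p, rfl⟩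
    have h2 : ‖(p : E3)‖ ^ 2 * |χ p| ≤ Cχ := hCχ ⟨p, rfl⟩
    have h3 : |δ p| ≤ |ψ p| + |χ p| := abs_sub _ _
    have h4 := mul_le_mul_of_nonneg_left h3 (sq_nonneg ‖(p : E3)‖)
    rw [mul_add] at h4
    show ‖(p : E3)‖ ^ 2 * |δ p| ≤ Cψ + Cχ
    linarith
  set C := ⨆ p : LatticePos, ‖(p : E3)‖ ^ 2 * |δ p| with hC
  have hCle : ∀ p : LatticePos, ‖(p : E3)‖ ^ 2 * |δ p| ≤ C := fun p => le_ciSup hδbdd p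
  have hC0 : 0 ≤ C := by
    obtain ⟨p⟩ := this
    exact le_trans (by positivity) (hCle p)
  -- pointwise bound
  have hpt : ∀ p : LatticePos, ‖(p : E3)‖ ^ 2 * |δ p| ≤ r * C := by
    intro p
    obtain ⟨hsψ, heψ⟩ := hψ p
    obtain ⟨hsχ, heχ⟩ := hχ p
    obtain ⟨hsδ, htδ⟩ := key hN hD p.2.1 hC0 hCle
    have hdiff : ∑' q : LatticePos, W ((N : ℝ)⁻¹ • ((p : E3) - (q : E3))) * δ q
        = (∑' q : LatticePos, W ((N : ℝ)⁻¹ • ((p : E3) - (q : E3))) * ψ q)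
          - ∑' q : LatticePos, W ((N : ℝ)⁻¹ • ((p : E3) - (q : E3))) * χ q := by
      rw [← Summable.tsum_sub hsψ.of_abs hsχ.of_abs]
      exact tsum_congr fun q => by simp only [hδ]; ring
    have heq : ‖(p : E3)‖ ^ 2 * δ p
        = -((κ / (2 * N)) * ∑' q : LatticePos,
            W ((N : ℝ)⁻¹ • ((p : E3) - (q : E3))) * δ q) := by
      rw [hdiff]
      simp only [hδ]
      have : ‖(p : E3)‖ ^ 2 * (ψ p - χ p) = ‖(p : E3)‖ ^ 2 * ψ p - ‖(p : E3)‖ ^ 2 * χ p := by ring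
      rw [this]
      linarith [heψ, heχ]
    have habs : |∑' q : LatticePos, W ((N : ℝ)⁻¹ • ((p : E3) - (q : E3))) * δ q|
        ≤ ∑' q : LatticePos, |W ((N : ℝ)⁻¹ • ((p : E3) - (q : E3))) * δ q| := by
      have := norm_tsum_le_tsum_norm
        (f := fun q : LatticePos => W ((N : ℝ)⁻¹ • ((p : E3) - (q : E3))) * δ q)
        (by simpa only [Real.norm_eq_abs] using hsδ)
      simpa only [Real.norm_eq_abs] using this
    calc ‖(p : E3)‖ ^ 2 * |δ p| = |‖(p : E3)‖ ^ 2 * δ p| := by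
          rw [abs_mul, abs_of_nonneg (sq_nonneg ‖(p : E3)‖)]
      _ = (κ / (2 * N)) * |∑' q : LatticePos, W ((N : ℝ)⁻¹ • ((p : E3) - (q : E3))) * δ q| := by
          rw [heq, abs_neg, abs_mul, abs_of_nonneg (by positivity)]
      _ ≤ (κ / (2 * N)) * (C * N * (DN N W).toReal) :=
          mul_le_mul_of_nonneg_left (habs.trans htδ) (by positivity)
      _ = r * C := by rw [hr]; field_simp
  have hCr : C ≤ r * C := ciSup_le hpt
  have hC0' : C ≤ 0 := by nlinarith
  funext p
  have h : ‖(p : E3)‖ ^ 2 * |δ p| ≤ 0 :=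
    le_trans (hpt p) (mul_nonpos_of_nonneg_of_nonpos hr0 hC0')
  have hq := norm_pos p
  have hpp : (0:ℝ) < ‖(p : E3)‖ ^ 2 := pow_pos hq 2
  have : |δ p| ≤ 0 := by
    by_contra hcon
    push_neg at hcon
    nlinarith
  have : δ p = 0 := abs_nonpos_iff.mp this
  simpa [hδ, sub_eq_zero] using this

/-- Born series: (i) `sup_p |p|²|φ⁽ᵏ⁾(p)| ≤ (κ/2)·sup|W|·(κ·D_N(W)/2)ᵏ`;
(ii) the series `Σ_k φ⁽ᵏ⁾(p)` converges absolutely for each `p`; (iii) its sum is the unique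
solution of the discrete scattering equation with `sup_p |p|²|φ(p)| < ∞`. -/
theorem statement10 (N : ℕ) (hN : 1 ≤ N) (κ : ℝ) (hκ : 0 < κ)
    (W : E3 → ℝ) (hWbdd : BddAbove (Set.range fun x => |W x|))
    (hD : DN N W < ⊤) (hκD : ENNReal.ofReal κ * DN N W < 2) :
    (∀ (k : ℕ) (p : LatticePos),
        ‖(p : E3)‖ ^ 2 * |bornSeries N κ W k p|
          ≤ (κ / 2) * (⨆ x : E3, |W x|) * (κ * (DN N W).toReal / 2) ^ k) ∧
    (∀ p : LatticePos, Summable (fun k : ℕ => |bornSeries N κ W k p|)) ∧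
    (BddAbove (Set.range fun p : LatticePos =>
        ‖(p : E3)‖ ^ 2 * |∑' k : ℕ, bornSeries N κ W k p|) ∧
      SolvesScatEq N κ W (fun p => ∑' k : ℕ, bornSeries N κ W k p) ∧
      ∀ ψ : LatticePos → ℝ,
        BddAbove (Set.range fun p : LatticePos => ‖(p : E3)‖ ^ 2 * |ψ p|) →
        SolvesScatEq N κ W ψ →
        ψ = fun p => ∑' k : ℕ, bornSeries N κ W k p) := by
  refine ⟨bornBound hN hκ hWbdd hD, bornSummable hN hκ hWbdd hD hκD, ?_,
    scat_sol hN hκ hWbdd hD hκD, fun ψ hψb hψ => ?_⟩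
  · refine ⟨(κ / 2) * (⨆ x : E3, |W x|) * (1 - κ * (DN N W).toReal / 2)⁻¹, ?_⟩
    rintro y ⟨p, rfl⟩
    exact sumBound hN hκ hWbdd hD hκD p
  · exact uniq hN hκ hD hκD hψb
      ⟨(κ / 2) * (⨆ x : E3, |W x|) * (1 - κ * (DN N W).toReal / 2)⁻¹, by
        rintro y ⟨p, rfl⟩; exact sumBound hN hκ hWbdd hD hκD p⟩
      hψ (scat_sol hN hκ hWbdd hD hκD)
end
end
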